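/- arXiv:1804.09972 — 7 statements merged into one kernel-verified Lean document; each statement's English description precedes it below -/
import Mathlib

section
/- For all integers m ≥ n ≥ 1, the optimal threshold factor R_{m,n} is an algebraic real number, i.e., R_{m,n} is a root of some nonzero polynomial with integer coefficients. -/
open Polynomial

noncomputable section

/-- A polynomial is absolutely monotonic on `[a, b]` if all of its derivatives
(including the 0th) are nonnegative at every point of `[a, b]`. -/
def AbsolutelyMonotonicOn (φ : Polynomial ℝ) (a b : ℝ) : Prop :=
  ∀ (k : ℕ), ∀ x ∈ Set.Icc a b, 0 ≤ (Polynomial.derivative^[k] φ).eval x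

/-- The set `Π_{m,n}` of real polynomials of degree at most `m` with
`φ^{(k)}(0) = 1` for `k = 0, 1, …, n`. -/
def PiSet (m n : ℕ) : Set (Polynomial ℝ) :=
  {φ : Polynomial ℝ | φ.natDegree ≤ m ∧ ∀ k ≤ n, (Polynomial.derivative^[k] φ).eval 0 = 1}

/-- The threshold factor `R(φ)`. -/
def thresholdFactor (φ : Polynomial ℝ) : ℝ :=
  sSup {r : ℝ | r = 0 ∨ (0 < r ∧ AbsolutelyMonotonicOn φ (-r) 0)}

/-- The optimal threshold factor `R_{m,n}`. -/
def Ropt (m n : ℕ) : ℝ :=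
  sSup (thresholdFactor '' PiSet m n)

/-!
Write `φ(x) = ψ(x + r)` with `ψ = ∑ⱼ bⱼ xʲ`. Then `φ ∈ Π_{m,n}` is absolutely monotonic on `[-r, 0]`
exactly when `b ≥ 0` and `A(r) b = 1`, where `A(r)ₖⱼ = j!/(j-k)! rʲ⁻ᵏ` is a matrix of integer
polynomials in `r`; so `R_{m,n}` separates the radii where this linear program is feasible from
those where it is not.

By the conic Carathéodory theorem, at every feasible radius the program has a solution supported
on linearly independent columns, and one support set `t` serves for radii accumulating at
`R_{m,n}` from below. On such a support the solution is unique, and Cramer's rule for the Gram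
matrix `AₜᵀAₜ` writes it as `G(r) / D(r)` with integer polynomials `D = det (AₜᵀAₜ)` and `Gⱼ`;
the identity `Aₜ G = D • 1` then holds at infinitely many points, hence identically. If `R_{m,n}`
were transcendental, `D` and the nonzero `D Gⱼ` would not vanish at `R_{m,n}`, where `D Gⱼ ≥ 0`
by continuity, so `G / D` would remain a nonnegative solution slightly beyond `R_{m,n}`.
-/

open Filter Topology Matrix

namespace Polynomial

variable {R : Type*}

theorem iterate_derivative_taylor [CommSemiring R] (p : R[X]) (r : R) (k : ℕ) :
    derivative^[k] (taylor r p) = taylor r (derivative^[k] p) := by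
  induction k with
  | zero => rfl
  | succ k ih =>
    rw [Function.iterate_succ_apply', ih, Function.iterate_succ_apply', taylor_apply,
      taylor_apply, derivative_comp]
    simp

theorem eval_zero_iterate_derivative_taylor [CommSemiring R] (p : R[X]) (r : R) (k : ℕ) :
    (derivative^[k] (taylor r p)).eval 0 = (derivative^[k] p).eval r := by
  rw [iterate_derivative_taylor, taylor_eval, zero_add]

theorem eval_zero_iterate_derivative [Semiring R] (p : R[X]) (k : ℕ) :
    (derivative^[k] p).eval 0 = k.factorial * p.coeff k := by
  rw [← coeff_zero_eq_eval_zero, coeff_iterate_derivative, zero_add, nsmul_eq_mul,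
    Nat.descFactorial_self]

theorem eval_nonneg_of_coeff_nonneg [Semiring R] [PartialOrder R] [IsOrderedRing R]
    {p : R[X]} (hp : ∀ i, 0 ≤ p.coeff i) {x : R} (hx : 0 ≤ x) : 0 ≤ p.eval x := by
  rw [eval_eq_sum_range]
  exact Finset.sum_nonneg fun i _ => mul_nonneg (hp i) (pow_nonneg hx i)

theorem eq_zero_of_frequently_aeval_eq_zero {p : ℤ[X]} {x : ℝ}
    (h : ∃ᶠ y in 𝓝[≠] x, aeval y p = 0) : p = 0 := by
  have hinf : {y : ℝ | aeval y p = 0}.Infinite :=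
    Set.Infinite.of_accPt (accPt_iff_frequently_nhdsNE.mpr h)
  refine map_injective (Int.castRingHom ℝ) Int.cast_injective ?_
  rw [Polynomial.map_zero]
  exact eq_zero_of_infinite_isRoot _ (by simpa [aeval_def, eval₂_eq_eval_map] using hinf)

end Polynomial

section Caratheodory

variable {𝕜 E ι : Type*} [Field 𝕜] [LinearOrder 𝕜] [IsStrictOrderedRing 𝕜]
  [AddCommGroup E] [Module 𝕜 E] [DecidableEq ι]

theorem exists_mem_erase_nonneg_sum_eq {v : ι → E} {s : Finset ι} {c g : ι → 𝕜}
    (hc : ∀ i ∈ s, 0 ≤ c i) (hg : ∑ i ∈ s, g i • v i = 0) (hpos : ∃ i ∈ s, 0 < g i) :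
    ∃ i ∈ s, ∃ d : ι → 𝕜, (∀ j ∈ s.erase i, 0 ≤ d j) ∧
      ∑ j ∈ s.erase i, d j • v j = ∑ j ∈ s, c j • v j := by
  -- move from `c` along `-g` until the first coefficient hits zero
  obtain ⟨i, hi, hmin⟩ := (s.filter (0 < g ·)).exists_min_image (fun j => c j / g j)
    (by simpa [Finset.Nonempty] using hpos)
  obtain ⟨his, hgi⟩ := Finset.mem_filter.mp hi
  set τ := c i / g i
  have hτ : 0 ≤ τ := div_nonneg (hc i his) hgi.le
  refine ⟨i, his, fun j => c j - τ * g j, fun j hj => ?_, ?_⟩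
  · have hjs := Finset.mem_of_mem_erase hj
    rcases le_or_gt (g j) 0 with hgj | hgj
    · nlinarith [hc j hjs]
    · have := hmin j (Finset.mem_filter.mpr ⟨hjs, hgj⟩)
      rw [le_div_iff₀ hgj] at this
      linarith
  · have hzero : c i - τ * g i = 0 := by simp [τ, hgi.ne']
    rw [Finset.sum_erase _ (by simp only [hzero, zero_smul])]
    simp only [sub_smul, Finset.sum_sub_distrib, mul_smul, ← Finset.smul_sum, hg, smul_zero,
      sub_zero]

theorem exists_linearIndepOn_nonneg_sum_eq (v : ι → E) (s : Finset ι) (c : ι → 𝕜)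
    (hc : ∀ i ∈ s, 0 ≤ c i) :
    ∃ t ⊆ s, ∃ d : ι → 𝕜, (∀ i ∈ t, 0 ≤ d i) ∧ ∑ i ∈ t, d i • v i = ∑ i ∈ s, c i • v i ∧
      LinearIndepOn 𝕜 v (t : Set ι) := by
  induction s using Finset.strongInduction generalizing c with
  | H s ih =>
  by_cases hs : LinearIndepOn 𝕜 v (s : Set ι)
  · exact ⟨s, subset_rfl, c, hc, rfl, hs⟩
  obtain ⟨f, hf, j, hj, hfj⟩ := not_linearIndepOn_finset_iff.mp hs
  obtain ⟨g, hg, hgpos⟩ : ∃ g : ι → 𝕜, ∑ i ∈ s, g i • v i = 0 ∧ ∃ i ∈ s, 0 < g i := by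
    rcases hfj.lt_or_gt with h | h
    · exact ⟨-f, by simp [neg_smul, hf], j, hj, by simpa using h⟩
    · exact ⟨f, hf, j, hj, h⟩
  obtain ⟨i, hi, d, hd, hsum⟩ := exists_mem_erase_nonneg_sum_eq hc hg hgpos
  obtain ⟨t, hts, d', hd', hsum', hind⟩ := ih _ (Finset.erase_ssubset hi) d hd
  exact ⟨t, hts.trans (Finset.erase_subset _ _), d', hd', hsum'.trans hsum, hind⟩

end Caratheodory

namespace Matrix

section

variable {R κ ι : Type*} [CommSemiring R]

theorem mulVec_eq_sum_smul_col [Fintype ι] (M : Matrix κ ι R) (b : ι → R) :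
    M *ᵥ b = ∑ i, b i • M.col i := by
  ext k
  simp [mulVec, dotProduct, mul_comm]

theorem submatrix_mulVec_eq_sum_smul_col (M : Matrix κ ι R) (t : Finset ι) (d : ι → R) :
    M.submatrix id ((↑) : t → ι) *ᵥ (fun i => d i) = ∑ i ∈ t, d i • M.col i := by
  rw [mulVec_eq_sum_smul_col, ← Finset.sum_coe_sort t]
  rfl

theorem exists_nonneg_mulVec_eq_submatrix_mulVec [PartialOrder R] [Fintype ι] (M : Matrix κ ι R)
    (t : Finset ι) {c : t → R} (hc : 0 ≤ c) :
    ∃ b : ι → R, 0 ≤ b ∧ M *ᵥ b = M.submatrix id (↑) *ᵥ c := by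
  classical
  set b : ι → R := fun i => if h : i ∈ t then c ⟨i, h⟩ else 0
  have hbc : (fun i : t => b i) = c := funext fun i => dif_pos i.2
  refine ⟨b, fun i => ?_, ?_⟩
  · by_cases h : i ∈ t
    · simpa [b, h] using hc ⟨i, h⟩
    · simp [b, h]
  · rw [← hbc, submatrix_mulVec_eq_sum_smul_col, mulVec_eq_sum_smul_col]
    exact (Finset.sum_subset t.subset_univ fun i _ hi => by simp [b, hi]).symm

end

theorem exists_injective_submatrix_mulVec_eq {𝕜 κ ι : Type*} [Field 𝕜] [LinearOrder 𝕜]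
    [IsStrictOrderedRing 𝕜] [Fintype ι] [DecidableEq ι] (M : Matrix κ ι 𝕜) {b : ι → 𝕜}
    (hb : 0 ≤ b) :
    ∃ (t : Finset ι) (c : t → 𝕜), 0 ≤ c ∧ M.submatrix id (↑) *ᵥ c = M *ᵥ b ∧
      Function.Injective (M.submatrix id ((↑) : t → ι)).mulVec := by
  obtain ⟨t, -, d, hd, hsum, hind⟩ :=
    exists_linearIndepOn_nonneg_sum_eq M.col Finset.univ b fun i _ => hb i
  refine ⟨t, fun i => d i, fun i => hd i i.2, ?_, mulVec_injective_iff.mpr hind⟩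
  rw [submatrix_mulVec_eq_sum_smul_col, hsum, mulVec_eq_sum_smul_col]

theorem aeval_mulVec {κ ι : Type*} [Fintype ι] (M : Matrix κ ι ℤ[X]) (v : ι → ℤ[X]) (r : ℝ) :
    (fun k => aeval r ((M *ᵥ v) k)) = M.map (aeval r) *ᵥ fun j => aeval r (v j) := by
  ext k
  simp [mulVec, dotProduct, map_sum]

variable {κ ι : Type*} [Fintype κ] [Fintype ι] [DecidableEq ι]

theorem aeval_det_transpose_mul_self (A : Matrix κ ι ℤ[X]) (r : ℝ) :
    aeval r (Aᵀ * A).det = ((A.map (aeval r))ᵀ * A.map (aeval r)).det := by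
  rw [AlgHom.map_det, AlgHom.mapMatrix_apply, Matrix.map_mul, transpose_map]

theorem aeval_det_transpose_mul_self_ne_zero (A : Matrix κ ι ℤ[X]) {r : ℝ}
    (hA : Function.Injective (A.map (aeval r)).mulVec) : aeval r (Aᵀ * A).det ≠ 0 := by
  rw [aeval_det_transpose_mul_self, ← conjTranspose_eq_transpose_of_trivial]
  exact (PosDef.conjTranspose_mul_self _ hA).det_pos.ne'

theorem aeval_cramer_transpose_mul_self (A : Matrix κ ι ℤ[X]) (e : κ → ℤ[X]) {r : ℝ}
    {c : ι → ℝ} (hA : Function.Injective (A.map (aeval r)).mulVec)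
    (hc : A.map (aeval r) *ᵥ c = fun k => aeval r (e k)) :
    (fun j => aeval r (cramer (Aᵀ * A) (Aᵀ *ᵥ e) j)) = aeval r (Aᵀ * A).det • c := by
  set Ar := A.map (aeval r)
  have hN : Function.Injective (Arᵀ * Ar).mulVec := by
    rw [mulVec_injective_iff_isUnit, isUnit_iff_isUnit_det, ← aeval_det_transpose_mul_self]
    exact (aeval_det_transpose_mul_self_ne_zero A hA).isUnit
  apply hN
  have key := congrArg (fun v k => aeval r (v k)) (mulVec_cramer (Aᵀ * A) (Aᵀ *ᵥ e))
  simp only [aeval_mulVec, Matrix.map_mul, transpose_map] at key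
  rw [key, mulVec_smul, ← mulVec_mulVec, hc]
  ext k
  have hk := congrFun (aeval_mulVec Aᵀ e r) k
  rw [transpose_map] at hk
  simp only [Pi.smul_apply, smul_eq_mul, map_mul, hk, Ar]

theorem eventually_exists_nonneg_mulVec_eq (A : Matrix κ ι ℤ[X]) (e : κ → ℤ[X]) {x : ℝ}
    (hx : Transcendental ℤ x)
    (h : ∃ᶠ r in 𝓝[≠] x, ∃ c, 0 ≤ c ∧ A.map (aeval r) *ᵥ c = (fun k => aeval r (e k)) ∧
      Function.Injective (A.map (aeval r)).mulVec) :
    ∀ᶠ r in 𝓝 x, ∃ c, 0 ≤ c ∧ A.map (aeval r) *ᵥ c = fun k => aeval r (e k) := by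
  set D := (Aᵀ * A).det
  set G := cramer (Aᵀ * A) (Aᵀ *ᵥ e)
  have hfreq : ∃ᶠ r in 𝓝[≠] x, aeval r D ≠ 0 ∧ (∀ j, 0 ≤ aeval r (D * G j)) ∧
      ∀ k, aeval r ((A *ᵥ G - D • e) k) = 0 := by
    refine h.mono fun r ⟨c, hc0, hc, hA⟩ => ?_
    have hG := aeval_cramer_transpose_mul_self A e hA hc
    refine ⟨aeval_det_transpose_mul_self_ne_zero A hA, fun j => ?_, fun k => ?_⟩
    · rw [map_mul, congrFun hG j, Pi.smul_apply, smul_eq_mul, ← mul_assoc]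
      exact mul_nonneg (mul_self_nonneg _) (hc0 j)
    · have hk := congrFun (aeval_mulVec A G r) k
      rw [hG, mulVec_smul, hc] at hk
      simp [hk, D]
  have hAG : A *ᵥ G = D • e := sub_eq_zero.mp <| funext fun k =>
    eq_zero_of_frequently_aeval_eq_zero (hfreq.mono fun r hr => hr.2.2 k)
  have hD : D ≠ 0 := by
    obtain ⟨r, hr, -⟩ := hfreq.exists
    rintro h
    simp [h] at hr
  have hpos : ∀ j, ∀ᶠ r in 𝓝 x, 0 ≤ aeval r (D * G j) := by
    intro j
    by_cases hG : G j = 0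
    · simp [hG]
    have hx₀ : 0 ≤ aeval x (D * G j) :=
      (isClosed_le continuous_const (D * G j).continuous_aeval).mem_of_frequently_of_tendsto
        (hfreq.mono fun r hr => hr.2.1 j) nhdsWithin_le_nhds
    have hx₁ : 0 < aeval x (D * G j) :=
      hx₀.lt_of_ne' fun h₀ => hx ⟨_, mul_ne_zero hD hG, h₀⟩
    exact (((D * G j).continuous_aeval).tendsto x).eventually_const_lt hx₁ |>.mono fun _ => le_of_lt
  have hDne : ∀ᶠ r in 𝓝 x, aeval r D ≠ 0 :=
    D.continuous_aeval.continuousAt.eventually_ne fun h₀ => hx ⟨D, hD, h₀⟩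
  filter_upwards [hDne, eventually_all.mpr hpos] with r hDr hGr
  refine ⟨(aeval r D)⁻¹ • fun j => aeval r (G j), fun j => ?_, ?_⟩
  · have : (aeval r D)⁻¹ * aeval r (G j) = aeval r (D * G j) / aeval r D ^ 2 := by
      rw [map_mul]
      field_simp
    simpa [this] using div_nonneg (hGr j) (sq_nonneg _)
  · rw [mulVec_smul, ← aeval_mulVec, hAG]
    ext k
    simp [hDr]

end Matrix

namespace OptimalThreshold

/-- With `φ(x) = ψ(x + r)` and `ψ = ∑ⱼ bⱼ xʲ`, row `k` of `constraintMatrix m n` evaluated at `r`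
sends `b` to `φ⁽ᵏ⁾(0) = ψ⁽ᵏ⁾(r)`. -/
def constraintMatrix (m n : ℕ) : Matrix (Fin (n + 1)) (Fin (m + 1)) ℤ[X] :=
  Matrix.of fun k j => C ((j : ℕ).descFactorial k : ℤ) * X ^ ((j : ℕ) - k)

def constraintSubmatrix (m n : ℕ) (t : Finset (Fin (m + 1))) : Matrix (Fin (n + 1)) t ℤ[X] :=
  (constraintMatrix m n).submatrix id (↑)

def Feasible (m n : ℕ) (r : ℝ) : Prop :=
  ∃ b : Fin (m + 1) → ℝ, 0 ≤ b ∧ (constraintMatrix m n).map (aeval r) *ᵥ b = 1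

variable {m n : ℕ}

theorem eval_iterate_derivative_eq_mulVec {ψ : ℝ[X]} (hψ : ψ.natDegree ≤ m) (r : ℝ)
    (k : Fin (n + 1)) :
    (derivative^[k] ψ).eval r =
      ((constraintMatrix m n).map (aeval r) *ᵥ fun j => ψ.coeff j) k := by
  conv_lhs => rw [ψ.as_sum_range' (m + 1) (Nat.lt_succ_of_le hψ)]
  rw [iterate_derivative_sum, eval_finsetSum,
    ← Fin.sum_univ_eq_sum_range fun j => eval r (derivative^[k] (monomial j (ψ.coeff j)))]
  refine Finset.sum_congr rfl fun j _ => ?_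
  rw [← C_mul_X_pow_eq_monomial, iterate_derivative_C_mul, iterate_derivative_X_pow_eq_C_mul]
  simp [constraintMatrix]
  ring

theorem absolutelyMonotonicOn_taylor_iff {ψ : ℝ[X]} {r : ℝ} (hr : 0 ≤ r) :
    AbsolutelyMonotonicOn (taylor r ψ) (-r) 0 ↔ ∀ j, 0 ≤ ψ.coeff j := by
  constructor
  · intro h j
    have hj := h j (-r) ⟨le_rfl, by linarith⟩
    rw [iterate_derivative_taylor, taylor_eval, neg_add_cancel,
      eval_zero_iterate_derivative] at hj
    exact nonneg_of_mul_nonneg_right hj (by positivity)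
  · intro h k x hx
    rw [iterate_derivative_taylor, taylor_eval]
    refine eval_nonneg_of_coeff_nonneg (fun i => ?_) (by linarith [hx.1])
    rw [coeff_iterate_derivative]
    exact nsmul_nonneg (h _) _

theorem exists_absolutelyMonotonicOn_iff_feasible {r : ℝ} (hr : 0 ≤ r) :
    (∃ φ ∈ PiSet m n, AbsolutelyMonotonicOn φ (-r) 0) ↔ Feasible m n r := by
  constructor
  · rintro ⟨φ, ⟨hdeg, hder⟩, ham⟩
    set ψ := taylor (-r) φ
    have hφ : taylor r ψ = φ := by rw [taylor_taylor, add_neg_cancel, taylor_zero]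
    have hψ : ψ.natDegree ≤ m := by rwa [natDegree_taylor]
    refine ⟨fun j => ψ.coeff j, fun j => (absolutelyMonotonicOn_taylor_iff hr).1 (hφ ▸ ham) j,
      funext fun k => ?_⟩
    rw [← eval_iterate_derivative_eq_mulVec hψ, ← eval_zero_iterate_derivative_taylor, hφ,
      hder k k.is_le, Pi.one_apply]
  · rintro ⟨b, hb, hAb⟩
    set ψ : ℝ[X] := ∑ j : Fin (m + 1), monomial j (b j)
    have hcoeff : ∀ i, ψ.coeff i = ∑ j : Fin (m + 1), if (j : ℕ) = i then b j else 0 := by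
      simp [ψ, finsetSum_coeff, coeff_monomial]
    have hψ : ψ.natDegree ≤ m :=
      natDegree_sum_le_of_forall_le _ _ fun j _ => (natDegree_monomial_le _).trans j.is_le
    refine ⟨taylor r ψ, ⟨by rwa [natDegree_taylor], fun k hk => ?_⟩,
      (absolutelyMonotonicOn_taylor_iff hr).2 fun i => ?_⟩
    · rw [eval_zero_iterate_derivative_taylor,
        eval_iterate_derivative_eq_mulVec (n := n) hψ r ⟨k, Nat.lt_succ_of_le hk⟩]
      simp [hcoeff, Fin.val_inj, hAb]
    · rw [hcoeff]
      exact Finset.sum_nonneg fun j _ => by split_ifs; exacts [hb j, le_rfl]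

theorem le_of_feasible (hn : 1 ≤ n) {r : ℝ} (hr : 0 ≤ r) (h : Feasible m n r) :
    r ≤ m := by
  obtain ⟨b, hb, hAb⟩ := h
  have row (k : Fin (n + 1)) :
      ∑ j : Fin (m + 1), (j : ℕ).descFactorial k * r ^ ((j : ℕ) - k) * b j = 1 := by
    simpa [mulVec, dotProduct, constraintMatrix] using congrFun hAb k
  have row₀ := row 0
  have row₁ := row ⟨1, by omega⟩
  simp only [Fin.val_zero, Nat.descFactorial_zero, Nat.cast_one, one_mul, Nat.sub_zero,
    Nat.descFactorial_one] at row₀ row₁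
  -- `r` times the first-derivative row is dominated by `m` times the value row
  have hterm (j : Fin (m + 1)) :
      (j : ℕ) * r ^ ((j : ℕ) - 1) * b j * r ≤ m * (r ^ (j : ℕ) * b j) := by
    have hj : (j : ℝ) ≤ m := by exact_mod_cast j.is_le
    have hpow : (j : ℕ) * r ^ ((j : ℕ) - 1) * r = (j : ℕ) * r ^ (j : ℕ) := by
      rcases Nat.eq_zero_or_pos (j : ℕ) with h0 | hpos
      · simp [h0]
      · rw [mul_assoc, ← pow_succ, Nat.sub_add_cancel hpos]
    calc (j : ℕ) * r ^ ((j : ℕ) - 1) * b j * r = (j : ℝ) * (r ^ (j : ℕ) * b j) := by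
          rw [mul_right_comm, hpow, mul_assoc]
      _ ≤ m * (r ^ (j : ℕ) * b j) := by gcongr; exact mul_nonneg (pow_nonneg hr _) (hb j)
  calc r = ∑ j : Fin (m + 1), (j : ℕ) * r ^ ((j : ℕ) - 1) * b j * r := by
        rw [← Finset.sum_mul, row₁, one_mul]
    _ ≤ ∑ j : Fin (m + 1), m * (r ^ (j : ℕ) * b j) := Finset.sum_le_sum fun j _ => hterm j
    _ = m := by rw [← Finset.mul_sum, row₀, mul_one]

theorem thresholdFactor_nonneg (φ : ℝ[X]) : 0 ≤ thresholdFactor φ :=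
  Real.sSup_nonneg fun _ hr => hr.elim (·.ge) (·.1.le)

theorem Ropt_nonneg (m n : ℕ) : 0 ≤ Ropt m n :=
  Real.sSup_nonneg fun _ ⟨φ, _, hφ⟩ => hφ ▸ thresholdFactor_nonneg φ

theorem le_of_mem_thresholdSet (hn : 1 ≤ n) {φ : ℝ[X]} (hφ : φ ∈ PiSet m n) {r : ℝ}
    (hr : r = 0 ∨ (0 < r ∧ AbsolutelyMonotonicOn φ (-r) 0)) : r ≤ m := by
  rcases hr with rfl | ⟨hr, ham⟩
  · positivity
  · exact le_of_feasible hn hr.le ((exists_absolutelyMonotonicOn_iff_feasible hr.le).1 ⟨φ, hφ, ham⟩)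

theorem thresholdFactor_le (hn : 1 ≤ n) {φ : ℝ[X]} (hφ : φ ∈ PiSet m n) :
    thresholdFactor φ ≤ m :=
  Real.sSup_le (fun _ hr => le_of_mem_thresholdSet hn hφ hr) (Nat.cast_nonneg m)

theorem feasible_of_lt_Ropt {r : ℝ} (hr₀ : 0 < r) (hr : r < Ropt m n) :
    Feasible m n r := by
  have hne : (thresholdFactor '' PiSet m n).Nonempty :=
    Set.nonempty_iff_ne_empty.2 fun h => by simp [Ropt, h] at hr; linarith
  obtain ⟨_, ⟨φ, hφ, rfl⟩, hrφ⟩ := exists_lt_of_lt_csSup hne hr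
  obtain ⟨s, hs, hrs⟩ := exists_lt_of_lt_csSup (by exact ⟨0, Or.inl rfl⟩) hrφ
  rcases hs with rfl | ⟨-, ham⟩
  · linarith
  exact (exists_absolutelyMonotonicOn_iff_feasible hr₀.le).1
    ⟨φ, hφ, fun k x hx => ham k x ⟨by linarith [hx.1], hx.2⟩⟩

theorem not_feasible_of_Ropt_lt (hn : 1 ≤ n) {r : ℝ} (hr : Ropt m n < r) :
    ¬Feasible m n r := by
  intro hf
  have hr₀ : 0 < r := (Ropt_nonneg m n).trans_lt hr
  obtain ⟨φ, hφ, ham⟩ := (exists_absolutelyMonotonicOn_iff_feasible hr₀.le).2 hf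
  have hrφ : r ≤ thresholdFactor φ :=
    le_csSup ⟨m, fun _ hs => le_of_mem_thresholdSet hn hφ hs⟩ (Or.inr ⟨hr₀, ham⟩)
  have hφR : thresholdFactor φ ≤ Ropt m n :=
    le_csSup ⟨m, fun _ ⟨ψ, hψ, h⟩ => h ▸ thresholdFactor_le hn hψ⟩ ⟨φ, hφ, rfl⟩
  linarith

theorem exists_frequently_injective_submatrix (hR : 0 < Ropt m n) :
    ∃ t : Finset (Fin (m + 1)), ∃ᶠ r in 𝓝[≠] Ropt m n, ∃ c, 0 ≤ c ∧
      (constraintSubmatrix m n t).map (aeval r) *ᵥ c = (fun _ => aeval r (1 : ℤ[X])) ∧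
      Function.Injective ((constraintSubmatrix m n t).map (aeval r)).mulVec := by
  rw [← Filter.frequently_exists]
  have hIoo : ∀ᶠ r in 𝓝[<] Ropt m n, r ∈ Set.Ioo 0 (Ropt m n) := Ioo_mem_nhdsLT hR
  refine (hIoo.frequently.filter_mono (nhdsLT_le_nhdsNE _)).mono fun r ⟨hr₀, hr⟩ => ?_
  obtain ⟨b, hb, hAb⟩ := feasible_of_lt_Ropt hr₀ hr
  obtain ⟨t, c, hc, hAc, hinj⟩ := exists_injective_submatrix_mulVec_eq _ hb
  refine ⟨t, c, hc, ?_, by rwa [constraintSubmatrix, ← submatrix_map]⟩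
  rw [constraintSubmatrix, ← submatrix_map, hAc, hAb, map_one]
  rfl

theorem feasible_of_submatrix {t : Finset (Fin (m + 1))} {r : ℝ} {c : t → ℝ}
    (hc : 0 ≤ c)
    (hAc : (constraintSubmatrix m n t).map (aeval r) *ᵥ c = fun _ => aeval r (1 : ℤ[X])) :
    Feasible m n r := by
  obtain ⟨b, hb, hAb⟩ := exists_nonneg_mulVec_eq_submatrix_mulVec _ t hc
  refine ⟨b, hb, ?_⟩
  rw [hAb, submatrix_map, ← constraintSubmatrix, hAc, map_one]
  rfl

end OptimalThreshold

open OptimalThreshold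

theorem statement3_general (m n : ℕ) (hn : 1 ≤ n) :
    ∃ q : Polynomial ℤ, q ≠ 0 ∧ Polynomial.aeval (Ropt m n) q = 0 := by
  by_contra hR
  have hR₀ : 0 < Ropt m n :=
    (Ropt_nonneg m n).lt_of_ne fun h => hR ⟨X, X_ne_zero, by simp [← h]⟩
  obtain ⟨t, ht⟩ := exists_frequently_injective_submatrix hR₀
  have hnear := eventually_exists_nonneg_mulVec_eq _ _ hR ht
  have hgt : ∀ᶠ r in 𝓝[>] Ropt m n, Ropt m n < r := self_mem_nhdsWithin
  obtain ⟨r, ⟨c, hc, hAc⟩, hr⟩ := ((hnear.filter_mono nhdsWithin_le_nhds).and hgt).exists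
  exact not_feasible_of_Ropt_lt hn hr (feasible_of_submatrix hc hAc)

theorem statement3 (m n : ℕ) (hn : 1 ≤ n) (hmn : n ≤ m) :
    ∃ q : Polynomial ℤ, q ≠ 0 ∧ Polynomial.aeval (Ropt m n) q = 0 :=
  statement3_general m n hn
end
end

section
/- Let m ≥ n ≥ 1 be integers, R > 0 a real number, α_1, …, α_s nonnegative real numbers, and 0 ≤ m_1 < m_2 < … < m_s ≤ m pairwise distinct integers. Then the following are equivalent: (i) H_n(x;R) = Σ_{i=1}^{s} α_i (x − m_i)^n for all real x; (ii) Σ_{i=1}^{s} α_i m_i^ℓ = B_ℓ(R) for every ℓ = 0, 1, …, n; (iii) ∫ P dμ_R = Σ_{i=1}^{s} α_i P(m_i) for every real polynomial P of degree at most n; (iv) the polynomial Φ(x) := Σ_{i=1}^{s} α_i (1 + x/R)^{m_i} is absolutely monotonic on [−R,0] and satisfies Φ^{(k)}(0) = 1 for k = 0, 1, …, n. -/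
open Polynomial

noncomputable section

/-- The Touchard polynomials `B_n`. -/
def touchard : ℕ → Polynomial ℝ
  | 0 => 1
  | (n + 1) => Polynomial.X * (touchard n + Polynomial.derivative (touchard n))

/-- The polynomial `H_n(·; R) = Σ_{k=0}^{n} (−1)^{n−k} binom(n,k) B_{n−k}(R) x^k`. -/
def Hpoly (n : ℕ) (R : ℝ) : Polynomial ℝ :=
  ∑ k ∈ Finset.range (n + 1),
    Polynomial.C ((-1 : ℝ) ^ (n - k) * (n.choose k : ℝ) * (touchard (n - k)).eval R) *
      Polynomial.X ^ k

/-- Integral of a polynomial against the Poisson–Charlier measure `μ_R`. -/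
def pcInt (R : ℝ) (f : Polynomial ℝ) : ℝ :=
  ∑' j : ℕ, Real.exp (-R) * f.eval (j : ℝ) * R ^ j / (Nat.factorial j : ℝ)

/-!
All four conditions say that `ν = ∑ αᵢ δ_{mᵢ}` and `μ_R` have the same integrals against
polynomials of degree at most `n`, each tested on a different basis. Condition (i) compares the
coefficients of `(x - y)ⁿ` expanded in powers of `y`, with `yˡ` integrated against `ν` on one side
and replaced by `B_ℓ(R)` on the other; condition (ii) tests the monomials, and condition (iv) the
falling factorials `(x)ₖ`, since `Φ⁽ᵏ⁾(0) = R⁻ᵏ ∑ αᵢ (mᵢ)ₖ`; absolute monotonicity of `Φ`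
is automatic because `αᵢ ≥ 0` and `1 + x/R ≥ 0` on `[-R, 0]`. Both families of moments of `μ_R`
come from the Stein identity `∫ x P(x) dμ_R = R ∫ P(x + 1) dμ_R`: it gives `∫ (x)ₖ dμ_R = Rᵏ`, and
`∫ xˡ⁺¹ dμ_R = R ∑ binom(l,k) ∫ xᵏ dμ_R`, which is the recursion of the Touchard polynomials.
-/

theorem LinearMap.forall_natDegree_le_eq_iff_of_monic {A M : Type*} [CommRing A]
    [AddCommGroup M] [Module A M] {L L' : A[X] →ₗ[A] M} {p : ℕ → A[X]}
    (hmonic : ∀ k, (p k).Monic) (hdeg : ∀ k, (p k).natDegree = k) (n : ℕ) :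
    (∀ P : A[X], P.natDegree ≤ n → L P = L' P) ↔ ∀ k ≤ n, L (p k) = L' (p k) := by
  refine ⟨fun h k hk => h _ ((hdeg k).trans_le hk), fun h P hP => ?_⟩
  induction n generalizing P with
  | zero =>
    rw [eq_C_of_natDegree_le_zero hP, ← mul_one (C _), ← smul_eq_C_mul,
      ← eq_one_of_monic_natDegree_zero (hmonic 0) (hdeg 0), map_smul, map_smul, h 0 le_rfl]
  | succ n ih =>
    set c := P.coeff (n + 1)
    have hlower : (P - c • p (n + 1)).natDegree ≤ n := by
      rw [natDegree_le_iff_coeff_eq_zero]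
      intro N hN
      rw [coeff_sub, coeff_smul, smul_eq_mul]
      rcases (Nat.succ_le_of_lt hN).eq_or_lt with rfl | hlt
      · have hlead := (hmonic (n + 1)).coeff_natDegree
        rw [hdeg] at hlead
        rw [hlead, mul_one, sub_self]
      · rw [coeff_eq_zero_of_natDegree_lt (hP.trans_lt hlt),
          coeff_eq_zero_of_natDegree_lt ((hdeg _).trans_lt hlt), mul_zero, sub_zero]
    have := ih (fun k hk => h k (hk.trans n.le_succ)) _ hlower
    rwa [map_sub, map_sub, map_smul, map_smul, h (n + 1) le_rfl, sub_left_inj] at this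

/-- `(X - Y)^n` expanded binomially, with `Y^ℓ` replaced by `b ℓ`. -/
def umbralSubPow {A : Type*} [CommRing A] (n : ℕ) (b : ℕ → A) : A[X] :=
  ∑ k ∈ Finset.range (n + 1), C ((-1 : A) ^ (n - k) * (n.choose k : A) * b (n - k)) * X ^ k

section Umbral

variable {A : Type*} [CommRing A]

theorem coeff_umbralSubPow (n : ℕ) (b : ℕ → A) (k : ℕ) :
    (umbralSubPow n b).coeff k = (-1 : A) ^ (n - k) * (n.choose k : A) * b (n - k) := by
  simp only [umbralSubPow, finsetSum_coeff, coeff_C_mul_X_pow, Finset.sum_ite_eq,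
    Finset.mem_range]
  split_ifs with hk
  · rfl
  · rw [Nat.choose_eq_zero_of_lt (by omega), Nat.cast_zero, mul_zero, zero_mul]

theorem sum_C_mul_X_sub_C_pow {ι : Type*} (s : Finset ι) (w p : ι → A) (n : ℕ) :
    ∑ i ∈ s, C (w i) * (X - C (p i)) ^ n = umbralSubPow n (fun ℓ => ∑ i ∈ s, w i * p i ^ ℓ) := by
  ext k
  simp only [coeff_umbralSubPow, finsetSum_coeff, coeff_C_mul, sub_eq_add_neg, ← C_neg,
    coeff_X_add_C_pow, Finset.mul_sum]
  exact Finset.sum_congr rfl fun i _ => by rw [neg_pow]; ring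

theorem umbralSubPow_eq_iff [IsDomain A] [CharZero A] {n : ℕ} {b b' : ℕ → A} :
    umbralSubPow n b = umbralSubPow n b' ↔ ∀ ℓ ≤ n, b ℓ = b' ℓ := by
  refine ⟨fun h ℓ hℓ => ?_, fun h => Finset.sum_congr rfl fun k _ => by rw [h _ (n.sub_le k)]⟩
  have hcoeff := congrArg (coeff · (n - ℓ)) h
  simp only [coeff_umbralSubPow, Nat.sub_sub_self hℓ] at hcoeff
  refine mul_left_cancel₀ (mul_ne_zero (pow_ne_zero _ (neg_ne_zero.2 one_ne_zero)) ?_) hcoeff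
  exact Nat.cast_ne_zero.2 (Nat.choose_pos (n.sub_le ℓ)).ne'

end Umbral

theorem Hpoly_eq_umbralSubPow (n : ℕ) (R : ℝ) :
    Hpoly n R = umbralSubPow n (fun ℓ => (touchard ℓ).eval R) := rfl

theorem touchard_add_derivative (l : ℕ) :
    touchard l + derivative (touchard l) = ∑ k ∈ Finset.range (l + 1), l.choose k • touchard k := by
  induction l with
  | zero => simp [touchard]
  | succ l ih =>
    have hshift : ∑ k ∈ Finset.range (l + 1), l.choose k • touchard (k + 1)
        = X * ((touchard l + derivative (touchard l))
            + derivative (touchard l + derivative (touchard l))) := by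
      rw [ih, derivative_sum, ← Finset.sum_add_distrib, Finset.mul_sum]
      simp only [derivative_smul, ← smul_add, mul_smul_comm, touchard]
    rw [Finset.sum_choose_succ_nsmul (fun k _ => touchard k), ← ih, hshift, touchard,
      derivative_mul, derivative_X, derivative_add]
    ring

theorem touchard_succ (l : ℕ) :
    touchard (l + 1) = X * ∑ k ∈ Finset.range (l + 1), l.choose k • touchard k := by
  rw [← touchard_add_derivative, touchard]

theorem iterate_derivative_one_add_C_mul_X_pow {A : Type*} [CommRing A] (a : A) (t k : ℕ) :
    derivative^[k] ((1 + C a * X) ^ t)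
      = C ((t.descFactorial k : A) * a ^ k) * (1 + C a * X) ^ (t - k) := by
  induction k with
  | zero => simp
  | succ k ih =>
    rw [Function.iterate_succ_apply', ih, derivative_C_mul, derivative_pow]
    simp only [derivative_add, derivative_one, derivative_C_mul_X, zero_add, Nat.descFactorial_succ,
      Nat.sub_sub, Nat.cast_mul, pow_succ, C_mul]
    ring

theorem summable_pow_mul_pow_div_factorial (k : ℕ) (x : ℝ) :
    Summable fun j : ℕ => (j : ℝ) ^ k * x ^ j / j.factorial := by
  refine .of_norm_bounded ((Real.summable_pow_div_factorial (Real.exp 1 * |x|)).mul_left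
    (k.factorial : ℝ)) fun j => ?_
  have hpow : (j : ℝ) ^ k ≤ k.factorial * Real.exp 1 ^ j := by
    rw [← Real.exp_nat_mul, mul_one, ← div_le_iff₀' (by positivity)]
    exact Real.pow_div_factorial_le_exp _ j.cast_nonneg k
  rw [Real.norm_eq_abs, abs_div, abs_mul, abs_pow, abs_pow, Nat.abs_cast, Nat.abs_cast, mul_pow,
    ← mul_div_assoc, ← mul_assoc]
  gcongr

theorem summable_pcInt (R : ℝ) (f : ℝ[X]) :
    Summable fun j : ℕ => Real.exp (-R) * f.eval (j : ℝ) * R ^ j / j.factorial := by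
  induction f using Polynomial.induction_on' with
  | add p q hp hq => simpa only [eval_add, mul_add, add_mul, add_div] using hp.add hq
  | monomial k a =>
    refine ((summable_pow_mul_pow_div_factorial k R).mul_left (Real.exp (-R) * a)).congr
      fun j => ?_
    rw [eval_monomial]
    ring

def pcIntLinear (R : ℝ) : ℝ[X] →ₗ[ℝ] ℝ where
  toFun := pcInt R
  map_add' p q := by
    simp only [pcInt, eval_add, mul_add, add_mul, add_div]
    exact (summable_pcInt R p).tsum_add (summable_pcInt R q)
  map_smul' c p := by
    simp only [pcInt, eval_smul, smul_eq_mul, RingHom.id_apply, ← tsum_mul_left]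
    exact tsum_congr fun j => by ring

@[simp]
theorem pcIntLinear_apply (R : ℝ) (f : ℝ[X]) : pcIntLinear R f = pcInt R f := rfl

theorem pcInt_one (R : ℝ) : pcInt R 1 = 1 := by
  simp only [pcInt, eval_one, mul_one, mul_div_assoc, tsum_mul_left]
  rw [(NormedSpace.expSeries_div_hasSum_exp R).tsum_eq, ← Real.exp_eq_exp_ℝ, ← Real.exp_add,
    neg_add_cancel, Real.exp_zero]

theorem pcInt_X_mul (R : ℝ) (P : ℝ[X]) : pcInt R (X * P) = R * pcInt R (P.comp (X + 1)) := by
  rw [pcInt, (summable_pcInt R (X * P)).tsum_eq_zero_add, pcInt, ← tsum_mul_left]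
  simp only [eval_mul, eval_X, CharP.cast_eq_zero, zero_mul, mul_zero, zero_div, zero_add,
    eval_comp, eval_add, eval_one]
  refine tsum_congr fun j => ?_
  rw [Nat.factorial_succ]
  push_cast
  field_simp
  ring

theorem pcInt_descPochhammer (R : ℝ) (k : ℕ) : pcInt R (descPochhammer ℝ k) = R ^ k := by
  induction k with
  | zero => rw [descPochhammer_zero, pcInt_one, pow_zero]
  | succ k ih =>
    rw [descPochhammer_succ_left, pcInt_X_mul, comp_assoc, sub_comp, X_comp, one_comp,
      add_sub_cancel_right, comp_X, ih, pow_succ']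

theorem X_add_one_pow_eq_sum {A : Type*} [CommSemiring A] (l : ℕ) :
    (X + 1 : A[X]) ^ l = ∑ k ∈ Finset.range (l + 1), l.choose k • X ^ k := by
  rw [add_pow]
  simp [nsmul_eq_mul, mul_comm]

theorem pcInt_X_pow (R : ℝ) (l : ℕ) : pcInt R (X ^ l) = (touchard l).eval R := by
  induction l using Nat.strong_induction_on with
  | _ l ih =>
    cases l with
    | zero => rw [pow_zero, pcInt_one, touchard, eval_one]
    | succ l =>
      rw [pow_succ', pcInt_X_mul, X_pow_comp, X_add_one_pow_eq_sum, ← pcIntLinear_apply, map_sum,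
        touchard_succ, eval_mul, eval_X, eval_finsetSum]
      simp only [map_nsmul, pcIntLinear_apply, eval_smul]
      exact congrArg (R * ·) (Finset.sum_congr rfl fun k hk => by
        rw [ih k (Finset.mem_range.1 hk)])

section OneAddPow

variable {ι : Type*} (s : Finset ι) (ms : ι → ℕ)

theorem eval_iterate_derivative_sum_C_mul_one_add_C_mul_X_pow {A : Type*} [CommRing A]
    (α : ι → A) (a : A) (k : ℕ) (x : A) :
    (derivative^[k] (∑ i ∈ s, C (α i) * (1 + C a * X) ^ ms i)).eval x
      = a ^ k * ∑ i ∈ s, α i * (ms i).descFactorial k * (1 + a * x) ^ (ms i - k) := by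
  simp only [iterate_derivative_sum, iterate_derivative_C_mul,
    iterate_derivative_one_add_C_mul_X_pow, eval_finsetSum, eval_mul, eval_C, eval_pow, eval_add,
    eval_one, eval_X, Finset.mul_sum]
  exact Finset.sum_congr rfl fun i _ => by ring

theorem absolutelyMonotonicOn_sum_C_mul_one_add_C_mul_X_pow {α : ι → ℝ}
    (hα : ∀ i ∈ s, 0 ≤ α i) {a b c : ℝ} (ha : 0 ≤ a) (hb : 0 ≤ 1 + a * b) :
    AbsolutelyMonotonicOn (∑ i ∈ s, C (α i) * (1 + C a * X) ^ ms i) b c := by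
  intro k x hx
  rw [eval_iterate_derivative_sum_C_mul_one_add_C_mul_X_pow]
  have hbase : 0 ≤ 1 + a * x := hb.trans (by gcongr; exact hx.1)
  exact mul_nonneg (pow_nonneg ha k) (Finset.sum_nonneg fun i hi => by have := hα i hi; positivity)

end OneAddPow

theorem statement6_general (n s : ℕ)
    (R : ℝ) (hR : 0 < R)
    (α : Fin s → ℝ) (hα : ∀ i, 0 ≤ α i)
    (ms : Fin s → ℕ) :
    List.TFAE
      [ (∀ x : ℝ, (Hpoly n R).eval x = ∑ i : Fin s, α i * (x - (ms i : ℝ)) ^ n),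
        (∀ ℓ ≤ n, ∑ i : Fin s, α i * ((ms i : ℝ)) ^ ℓ = (touchard ℓ).eval R),
        (∀ P : Polynomial ℝ, P.natDegree ≤ n →
          pcInt R P = ∑ i : Fin s, α i * P.eval ((ms i : ℝ))),
        (AbsolutelyMonotonicOn
            (∑ i : Fin s, Polynomial.C (α i) *
              ((1 : Polynomial ℝ) + Polynomial.C R⁻¹ * Polynomial.X) ^ (ms i)) (-R) 0 ∧
          ∀ k ≤ n,
            (Polynomial.derivative^[k]
              (∑ i : Fin s, Polynomial.C (α i) *
                ((1 : Polynomial ℝ) + Polynomial.C R⁻¹ * Polynomial.X) ^ (ms i))).eval 0 = 1) ]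
    := by
  set L : ℝ[X] →ₗ[ℝ] ℝ := ∑ i, α i • leval (ms i : ℝ)
  have hL (P : ℝ[X]) : L P = ∑ i, α i * P.eval (ms i : ℝ) := by simp [L]
  have hcond3 : (∀ P : ℝ[X], P.natDegree ≤ n → pcInt R P = ∑ i, α i * P.eval (ms i : ℝ)) ↔
      ∀ P : ℝ[X], P.natDegree ≤ n → pcIntLinear R P = L P := by
    simp only [pcIntLinear_apply, hL]
  tfae_have 1 ↔ 2 := by
    have h := umbralSubPow_eq_iff (n := n) (b := fun ℓ => ∑ i, α i * (ms i : ℝ) ^ ℓ)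
      (b' := fun ℓ => (touchard ℓ).eval R)
    rw [← sum_C_mul_X_sub_C_pow, ← Hpoly_eq_umbralSubPow] at h
    rw [← h]
    refine ⟨fun h1 => (Polynomial.funext fun x => ?_).symm, fun h2 x => ?_⟩
    · simp [h1, eval_finsetSum]
    · simp [← h2, eval_finsetSum]
  tfae_have 2 ↔ 3 := by
    rw [hcond3, LinearMap.forall_natDegree_le_eq_iff_of_monic monic_X_pow natDegree_X_pow]
    simp only [pcIntLinear_apply, pcInt_X_pow, hL, eval_pow, eval_X, eq_comm]
  tfae_have 3 ↔ 4 := by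
    rw [hcond3, LinearMap.forall_natDegree_le_eq_iff_of_monic (fun k => monic_descPochhammer ℝ k)
      (fun k => descPochhammer_natDegree ℝ k), and_iff_right
      (absolutelyMonotonicOn_sum_C_mul_one_add_C_mul_X_pow _ _ (fun i _ => hα i)
        (inv_nonneg.2 hR.le) (by rw [mul_neg, inv_mul_cancel₀ hR.ne', add_neg_cancel]))]
    simp only [pcIntLinear_apply, pcInt_descPochhammer, hL, descPochhammer_eval_eq_descFactorial,
      eval_iterate_derivative_sum_C_mul_one_add_C_mul_X_pow, mul_zero, add_zero, one_pow, mul_one]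
    refine forall₂_congr fun k _ => ?_
    rw [inv_pow, inv_mul_eq_one₀ (pow_ne_zero _ hR.ne')]
  tfae_finish

theorem statement6 (m n s : ℕ) (hn : 1 ≤ n) (hmn : n ≤ m) (hs : 1 ≤ s)
    (R : ℝ) (hR : 0 < R)
    (α : Fin s → ℝ) (hα : ∀ i, 0 ≤ α i)
    (ms : Fin s → ℕ) (hms : StrictMono ms) (hmsm : ∀ i, ms i ≤ m) :
    List.TFAE
      [ (∀ x : ℝ, (Hpoly n R).eval x = ∑ i : Fin s, α i * (x - (ms i : ℝ)) ^ n),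
        (∀ ℓ ≤ n, ∑ i : Fin s, α i * ((ms i : ℝ)) ^ ℓ = (touchard ℓ).eval R),
        (∀ P : Polynomial ℝ, P.natDegree ≤ n →
          pcInt R P = ∑ i : Fin s, α i * P.eval ((ms i : ℝ))),
        (AbsolutelyMonotonicOn
            (∑ i : Fin s, Polynomial.C (α i) *
              ((1 : Polynomial ℝ) + Polynomial.C R⁻¹ * Polynomial.X) ^ (ms i)) (-R) 0 ∧
          ∀ k ≤ n,
            (Polynomial.derivative^[k]
              (∑ i : Fin s, Polynomial.C (α i) *
                ((1 : Polynomial ℝ) + Polynomial.C R⁻¹ * Polynomial.X) ^ (ms i))).eval 0 = 1) ] :=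
  statement6_general n s R hR α hα ms
end
end

section
/- Let m ≥ n ≥ 1 be integers. Then the set S := {R > 0 : there exist s ≥ 1, integers 0 ≤ m_1 < m_2 < … < m_s ≤ m and nonnegative real numbers α_1, …, α_s with H_n(x;R) = Σ_{i=1}^{s} α_i (x − m_i)^n for all real x} has a maximum, and this maximum equals the optimal threshold factor R_{m,n}. -/
open Polynomial

noncomputable section

/-!
A polynomial `φ` of degree at most `m` is absolutely monotonic on `[-r, 0]` exactly when its
Taylor coefficients at `-r` are nonnegative, i.e. when `φ(x) = ∑_{j ≤ m} c_j (1 + x / r)^j` with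
`c_j ≥ 0`. In these coordinates the conditions `φ^{(k)}(0) = 1` for `k ≤ n` say that the weights
`c_j` on `{0, …, m}` have the factorial moments `∑ c_j (j)_k = r^k` of a Poisson law of mean `r`.
Through the Stirling numbers of the second kind this is the same as matching its power moments
`B_i(r)`, and expanding `∑ c_j (x - j)^n` binomially turns these into the coefficient identities
`H_n(x; r) = ∑ c_j (x - j)^n`. The admissible radii `r` form a compact set (the weights are a
probability vector) containing `1/2` (take the truncated exponential), so their maximum exists, is
positive, and is attained both by an absolutely monotonic polynomial and by a representation of
`H_n`.
-/

open Finset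

theorem sum_stirlingSecond_succ_smul {M : Type*} [AddCommMonoid M] (g : ℕ → M) (i : ℕ) :
    ∑ k ∈ range (i + 2), Nat.stirlingSecond (i + 1) k • g k =
      ∑ k ∈ range (i + 1), Nat.stirlingSecond i k • (g (k + 1) + k • g k) := by
  have hshift : ∑ k ∈ range (i + 1), ((k + 1) * Nat.stirlingSecond i (k + 1)) • g (k + 1) =
      ∑ k ∈ range (i + 1), (k * Nat.stirlingSecond i k) • g k := by
    have h := sum_range_succ' (fun k => (k * Nat.stirlingSecond i k) • g k) (i + 1)
    rw [sum_range_succ, Nat.stirlingSecond_eq_zero_of_lt (lt_add_one i)] at h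
    simpa using h.symm
  rw [sum_range_succ']
  simp only [Nat.stirlingSecond_succ_succ, Nat.stirlingSecond_succ_zero, zero_smul, add_zero,
    add_smul, sum_add_distrib, smul_add, hshift]
  rw [add_comm]
  exact congrArg _ (sum_congr rfl fun k _ => by rw [mul_comm, mul_smul])

theorem Nat.self_mul_descFactorial (x k : ℕ) :
    x * x.descFactorial k = x.descFactorial (k + 1) + k * x.descFactorial k := by
  rcases le_or_gt k x with h | h
  · rw [Nat.descFactorial_succ, ← add_mul, Nat.sub_add_cancel h]
  · simp [Nat.descFactorial_eq_zero_iff_lt.2 h]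

theorem Nat.pow_eq_sum_stirlingSecond_mul_descFactorial (x : ℕ) : ∀ i : ℕ,
    x ^ i = ∑ k ∈ range (i + 1), Nat.stirlingSecond i k * x.descFactorial k
  | 0 => by simp
  | i + 1 => by
    have h := sum_stirlingSecond_succ_smul (fun k => x.descFactorial k) i
    simp only [smul_eq_mul, ← Nat.self_mul_descFactorial] at h
    rw [h, pow_succ', Nat.pow_eq_sum_stirlingSecond_mul_descFactorial x i, mul_sum]
    exact sum_congr rfl fun k _ => by ring

theorem X_mul_derivative_X_pow {R : Type*} [CommSemiring R] (k : ℕ) :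
    (X : R[X]) * derivative (X ^ k) = k • X ^ k := by
  cases k with
  | zero => simp
  | succ k => rw [derivative_X_pow, nsmul_eq_mul, map_natCast, add_tsub_cancel_right]; ring

theorem touchard_eq_sum : ∀ i : ℕ,
    touchard i = ∑ k ∈ range (i + 1), Nat.stirlingSecond i k • (X : ℝ[X]) ^ k
  | 0 => by simp [touchard]
  | i + 1 => by
    rw [sum_stirlingSecond_succ_smul, touchard, touchard_eq_sum i, derivative_sum,
      ← sum_add_distrib, mul_sum]
    refine sum_congr rfl fun k _ => ?_
    rw [derivative_smul, ← smul_add, mul_smul_comm, mul_add, X_mul_derivative_X_pow,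
      ← pow_succ' (X : ℝ[X]) k]

theorem touchard_eval (i : ℕ) (R : ℝ) :
    (touchard i).eval R = ∑ k ∈ range (i + 1), (Nat.stirlingSecond i k : ℝ) * R ^ k := by
  simp [touchard_eq_sum, eval_finsetSum, nsmul_eq_mul]

section Moments

variable {ι : Type*} [Fintype ι] (p : ι → ℕ) (c : ι → ℝ)

theorem sum_mul_pow_eq_sum_stirlingSecond (i : ℕ) :
    ∑ j, c j * (p j : ℝ) ^ i =
      ∑ k ∈ range (i + 1),
        (Nat.stirlingSecond i k : ℝ) * ∑ j, c j * ((p j).descFactorial k : ℝ) := by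
  simp_rw [mul_sum]
  rw [sum_comm]
  refine sum_congr rfl fun j _ => ?_
  rw [← Nat.cast_pow, Nat.pow_eq_sum_stirlingSecond_mul_descFactorial, Nat.cast_sum, mul_sum]
  exact sum_congr rfl fun k _ => by push_cast; ring

theorem sum_mul_descFactorial_eq_pow_iff (n : ℕ) (R : ℝ) :
    (∀ k ≤ n, ∑ j, c j * ((p j).descFactorial k : ℝ) = R ^ k) ↔
      ∀ i ≤ n, ∑ j, c j * (p j : ℝ) ^ i = (touchard i).eval R := by
  refine ⟨fun h i hi => ?_, fun h k => ?_⟩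
  · rw [sum_mul_pow_eq_sum_stirlingSecond, touchard_eval]
    exact sum_congr rfl fun k hk => by rw [h k (by grind)]
  · induction k using Nat.strong_induction_on with
    | _ k ih =>
      intro hk
      have hkey := h k hk
      rw [sum_mul_pow_eq_sum_stirlingSecond, touchard_eval, sum_range_succ, sum_range_succ,
        Nat.stirlingSecond_self,
        sum_congr rfl fun l hl => by rw [ih l (mem_range.1 hl) (by grind)]] at hkey
      simpa using hkey

end Moments

theorem coeff_sum_range_C_mul_X_pow {R : Type*} [Semiring R] (a : ℕ → R) (N k : ℕ) :
    (∑ l ∈ range N, C (a l) * X ^ l).coeff k = if k < N then a k else 0 := by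
  simp

theorem sum_range_C_mul_X_pow_eq_iff {R : Type*} [Semiring R] (a b : ℕ → R) (N : ℕ) :
    ∑ l ∈ range N, C (a l) * X ^ l = ∑ l ∈ range N, C (b l) * X ^ l ↔
      ∀ k < N, a k = b k := by
  refine ⟨fun h k hk => ?_, fun h => sum_congr rfl fun k hk => by rw [h k (mem_range.1 hk)]⟩
  simpa [coeff_sum_range_C_mul_X_pow, hk] using congrArg (coeff · k) h

theorem sum_C_mul_X_sub_C_pow_s7 {R ι : Type*} [CommRing R] [Fintype ι] (p α : ι → R) (n : ℕ) :
    ∑ i, C (α i) * (X - C (p i)) ^ n =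
      ∑ k ∈ range (n + 1),
        C ((-1) ^ (n - k) * (n.choose k : R) * ∑ i, α i * p i ^ (n - k)) * X ^ k := by
  simp_rw [sub_eq_add_neg, add_pow, mul_sum]
  rw [sum_comm]
  refine sum_congr rfl fun k _ => ?_
  simp only [map_sum, sum_mul]
  refine sum_congr rfl fun i _ => ?_
  simp only [map_mul, map_pow, map_neg, map_one, map_natCast, neg_pow (C (p i))]
  ring

theorem eval_Hpoly_eq_sum_iff {ι : Type*} [Fintype ι] (p α : ι → ℝ) (n : ℕ) (R : ℝ) :
    (∀ x, (Hpoly n R).eval x = ∑ i, α i * (x - p i) ^ n) ↔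
      ∀ e ≤ n, ∑ i, α i * p i ^ e = (touchard e).eval R := by
  have hpoly : (∀ x, (Hpoly n R).eval x = ∑ i, α i * (x - p i) ^ n) ↔
      Hpoly n R = ∑ i, C (α i) * (X - C (p i)) ^ n := by
    refine ⟨fun h => Polynomial.funext fun x => by simp [h, eval_finsetSum], fun h x => ?_⟩
    simp [h, eval_finsetSum]
  rw [hpoly, Hpoly, sum_C_mul_X_sub_C_pow_s7, sum_range_C_mul_X_pow_eq_iff]
  have hunit (k : ℕ) (hk : k ≤ n) : (-1 : ℝ) ^ (n - k) * (n.choose k : ℝ) ≠ 0 :=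
    mul_ne_zero (pow_ne_zero _ (by norm_num)) (Nat.cast_ne_zero.2 (Nat.choose_pos hk).ne')
  refine ⟨fun h e he => ?_, fun h k hk => ?_⟩
  · have := mul_left_cancel₀ (hunit (n - e) (Nat.sub_le n e)) (h (n - e) (by omega))
    rw [Nat.sub_sub_self he] at this
    exact this.symm
  · rw [h (n - k) (Nat.sub_le n k)]

def admissibleRadii (m n : ℕ) : Set ℝ :=
  {r | 0 ≤ r ∧ ∃ c : Fin (m + 1) → ℝ, (∀ j, 0 ≤ c j) ∧
    ∀ k ≤ n, ∑ j, c j * ((j : ℕ).descFactorial k : ℝ) = r ^ k}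

section ShiftedPowerSum

variable {ι : Type*} [Fintype ι] (r : ℝ) (p : ι → ℕ) (c : ι → ℝ)

/-- `∑ i, c i * (1 + x / r) ^ p i`, written in the basis `(x + r) ^ j`. -/
def shiftedPowerSum : ℝ[X] :=
  ∑ i, C (c i / r ^ p i) * (X + C r) ^ p i

theorem eval_iterate_derivative_shiftedPowerSum (k : ℕ) (x : ℝ) :
    (derivative^[k] (shiftedPowerSum r p c)).eval x =
      ∑ i, c i / r ^ p i * (p i).descFactorial k * (x + r) ^ (p i - k) := by
  simp [shiftedPowerSum, iterate_derivative_sum, iterate_derivative_C_mul,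
    iterate_derivative_X_add_pow, eval_finsetSum, nsmul_eq_mul, mul_assoc]

theorem eval_iterate_derivative_shiftedPowerSum_zero (hr : r ≠ 0) (k : ℕ) :
    (derivative^[k] (shiftedPowerSum r p c)).eval 0 =
      (∑ i, c i * ((p i).descFactorial k : ℝ)) / r ^ k := by
  rw [eval_iterate_derivative_shiftedPowerSum, sum_div]
  refine sum_congr rfl fun i _ => ?_
  rcases le_or_gt k (p i) with hk | hk
  · rw [zero_add, ← Nat.sub_add_cancel hk, pow_add, Nat.add_sub_cancel]
    field_simp
  · simp [Nat.descFactorial_eq_zero_iff_lt.2 hk]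

theorem absolutelyMonotonicOn_shiftedPowerSum (hr : 0 < r) (hc : ∀ i, 0 ≤ c i) :
    AbsolutelyMonotonicOn (shiftedPowerSum r p c) (-r) 0 := by
  intro k x hx
  rw [eval_iterate_derivative_shiftedPowerSum]
  have hxr : 0 ≤ x + r := by linarith [hx.1]
  exact sum_nonneg fun i _ => by have := hc i; positivity

theorem natDegree_shiftedPowerSum_le {m : ℕ} (hp : ∀ i, p i ≤ m) :
    (shiftedPowerSum r p c).natDegree ≤ m := by
  refine natDegree_sum_le_of_forall_le _ _ fun i _ => (natDegree_C_mul_le _ _).trans ?_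
  exact natDegree_pow_le_of_le _ (natDegree_X_add_C r).le |>.trans (by simpa using hp i)

theorem shiftedPowerSum_mem_PiSet {m n : ℕ} (hr : 0 < r) (hp : ∀ i, p i ≤ m)
    (hmom : ∀ k ≤ n, ∑ i, c i * ((p i).descFactorial k : ℝ) = r ^ k) :
    shiftedPowerSum r p c ∈ PiSet m n := by
  refine ⟨natDegree_shiftedPowerSum_le r p c hp, fun k hk => ?_⟩
  rw [eval_iterate_derivative_shiftedPowerSum_zero r p c hr.ne', hmom k hk,
    div_self (pow_ne_zero _ hr.ne')]

end ShiftedPowerSum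

theorem eq_shiftedPowerSum_taylor {m : ℕ} (φ : ℝ[X]) (hφ : φ.natDegree ≤ m) {r : ℝ}
    (hr : r ≠ 0) :
    φ = shiftedPowerSum r (fun j : Fin (m + 1) => (j : ℕ))
      (fun j => (taylor (-r) φ).coeff j * r ^ (j : ℕ)) := by
  have htaylor := sum_taylor_eq φ (-r)
  rw [sum_over_range' _ (fun _ => by simp) (m + 1) (by rw [natDegree_taylor]; omega),
    ← Fin.sum_univ_eq_sum_range] at htaylor
  simp only [shiftedPowerSum, mul_div_cancel_right₀ _ (pow_ne_zero _ hr)]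
  simpa [sub_eq_add_neg] using htaylor.symm

theorem taylor_coeff_nonneg_of_absolutelyMonotonicOn {φ : ℝ[X]} {r : ℝ} (hr : 0 ≤ r)
    (hφ : AbsolutelyMonotonicOn φ (-r) 0) (j : ℕ) : 0 ≤ (taylor (-r) φ).coeff j := by
  have hfac : (j.factorial : ℝ) * (taylor (-r) φ).coeff j = (derivative^[j] φ).eval (-r) := by
    rw [taylor_coeff, ← factorial_smul_hasseDeriv]
    simp [nsmul_eq_mul]
  exact nonneg_of_mul_nonneg_right (hfac ▸ hφ j (-r) ⟨le_rfl, by linarith⟩)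
    (by positivity)

theorem mem_admissibleRadii_of_absolutelyMonotonicOn {m n : ℕ} {φ : ℝ[X]}
    (hφ : φ ∈ PiSet m n) {r : ℝ} (hr : 0 < r) (hφr : AbsolutelyMonotonicOn φ (-r) 0) :
    r ∈ admissibleRadii m n := by
  refine ⟨hr.le, fun j => (taylor (-r) φ).coeff j * r ^ (j : ℕ),
    fun j => mul_nonneg (taylor_coeff_nonneg_of_absolutelyMonotonicOn hr.le hφr j) (by positivity),
    fun k hk => ?_⟩
  have h := hφ.2 k hk
  rw [eq_shiftedPowerSum_taylor φ hφ.1 hr.ne', eval_iterate_derivative_shiftedPowerSum_zero _ _ _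
    hr.ne', div_eq_one_iff_eq (pow_ne_zero _ hr.ne')] at h
  exact h

theorem exists_absolutelyMonotonicOn_of_mem_admissibleRadii {m n : ℕ} {r : ℝ} (hr : 0 < r)
    (hmem : r ∈ admissibleRadii m n) : ∃ φ ∈ PiSet m n, AbsolutelyMonotonicOn φ (-r) 0 := by
  obtain ⟨-, c, hc, hmom⟩ := hmem
  exact ⟨_, shiftedPowerSum_mem_PiSet r _ c hr (fun j => Nat.lt_succ_iff.1 j.isLt) hmom,
    absolutelyMonotonicOn_shiftedPowerSum r _ c hr hc⟩

def truncExp (N : ℕ) : ℝ[X] :=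
  ∑ j ∈ range (N + 1), C (j.factorial⁻¹ : ℝ) * X ^ j

theorem derivative_truncExp_succ (N : ℕ) : derivative (truncExp (N + 1)) = truncExp N := by
  rw [truncExp, derivative_sum, sum_range_succ']
  simp only [derivative_C_mul_X_pow, Nat.factorial_succ, Nat.cast_mul, add_tsub_cancel_right,
    Nat.cast_succ, pow_zero, mul_one, derivative_C, add_zero, truncExp]
  refine sum_congr rfl fun j _ => ?_
  congr 2
  field_simp

theorem iterate_derivative_truncExp {N k : ℕ} (hk : k ≤ N) :
    derivative^[k] (truncExp N) = truncExp (N - k) := by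
  induction k with
  | zero => rfl
  | succ k ih =>
    rw [Function.iterate_succ_apply', ih (by omega), show N - k = N - (k + 1) + 1 by omega,
      derivative_truncExp_succ]

theorem natDegree_truncExp_le (N : ℕ) : (truncExp N).natDegree ≤ N :=
  natDegree_sum_le_of_forall_le _ _ fun _ hj =>
    (natDegree_C_mul_X_pow_le _ _).trans (Nat.lt_succ_iff.1 (mem_range.1 hj))

theorem truncExp_eval_nonneg (N : ℕ) {x : ℝ} (hx : x ∈ Set.Icc (-(1 / 2)) 0) :
    0 ≤ (truncExp N).eval x := by
  have hterm (j : ℕ) :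
      (if j = 0 then 2 else 0) - (1 / 2 : ℝ) ^ j ≤ (j.factorial⁻¹ : ℝ) * x ^ j := by
    rcases eq_or_ne j 0 with rfl | hj
    · norm_num
    · have habs : |(j.factorial⁻¹ : ℝ) * x ^ j| ≤ (1 / 2) ^ j := by
        rw [abs_mul, abs_pow, abs_inv, Nat.abs_cast]
        calc (j.factorial⁻¹ : ℝ) * |x| ^ j ≤ 1 * (1 / 2) ^ j := by
              gcongr
              · exact inv_le_one_of_one_le₀ (by exact_mod_cast j.factorial_pos)
              · exact abs_le.2 ⟨hx.1, by linarith [hx.2]⟩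
          _ = (1 / 2) ^ j := one_mul _
      simpa [hj] using neg_le_of_abs_le habs
  calc (0 : ℝ) ≤ 2 - ∑ j ∈ range (N + 1), (1 / 2 : ℝ) ^ j := by
        linarith [sum_geometric_two_le (N + 1)]
    _ = ∑ j ∈ range (N + 1), ((if j = 0 then 2 else 0) - (1 / 2 : ℝ) ^ j) := by
      rw [sum_sub_distrib, sum_ite_eq' (range (N + 1)) 0, if_pos (mem_range.2 N.succ_pos)]
    _ ≤ (truncExp N).eval x := by
      rw [truncExp, eval_finsetSum]
      exact sum_le_sum fun j _ => by simpa using hterm j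

theorem truncExp_mem_PiSet {m n : ℕ} (hmn : n ≤ m) : truncExp n ∈ PiSet m n := by
  refine ⟨(natDegree_truncExp_le n).trans hmn, fun k hk => ?_⟩
  rw [iterate_derivative_truncExp hk, truncExp, eval_finsetSum, sum_range_succ']
  simp

theorem absolutelyMonotonicOn_truncExp (n : ℕ) :
    AbsolutelyMonotonicOn (truncExp n) (-(1 / 2)) 0 := by
  intro k x hx
  rcases le_or_gt k n with hk | hk
  · rw [iterate_derivative_truncExp hk]
    exact truncExp_eval_nonneg _ hx
  · rw [iterate_derivative_eq_zero ((natDegree_truncExp_le n).trans_lt hk), eval_zero]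

section AdmissibleRadii

variable {m n : ℕ}

theorem zero_mem_admissibleRadii : (0 : ℝ) ∈ admissibleRadii m n := by
  refine ⟨le_rfl, Pi.single 0 1, fun j => by rw [Pi.single_apply]; split_ifs <;> norm_num,
    fun k _ => ?_⟩
  rw [sum_eq_single_of_mem 0 (mem_univ _) fun j _ hj => by simp [hj]]
  cases k <;> simp

theorem one_half_mem_admissibleRadii (hmn : n ≤ m) : (1 / 2 : ℝ) ∈ admissibleRadii m n :=
  mem_admissibleRadii_of_absolutelyMonotonicOn (truncExp_mem_PiSet hmn) (by norm_num)
    (absolutelyMonotonicOn_truncExp n)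

theorem sum_eq_one_of_descFactorial_moments {r : ℝ} {c : Fin (m + 1) → ℝ}
    (hmom : ∀ k ≤ n, ∑ j, c j * ((j : ℕ).descFactorial k : ℝ) = r ^ k) :
    ∑ j, c j = 1 := by
  simpa using hmom 0 (Nat.zero_le n)

theorem le_of_mem_admissibleRadii (hn : 1 ≤ n) {r : ℝ} (hr : r ∈ admissibleRadii m n) :
    r ≤ m := by
  obtain ⟨-, c, hc, hmom⟩ := hr
  calc r = ∑ j, c j * (j : ℕ) := by simpa using (hmom 1 hn).symm
    _ ≤ ∑ j, c j * m := sum_le_sum fun j _ =>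
      mul_le_mul_of_nonneg_left (by exact_mod_cast Nat.lt_succ_iff.1 j.isLt) (hc j)
    _ = m := by rw [← sum_mul, sum_eq_one_of_descFactorial_moments hmom, one_mul]

theorem isCompact_admissibleRadii (hn : 1 ≤ n) : IsCompact (admissibleRadii m n) := by
  let K : Set (ℝ × (Fin (m + 1) → ℝ)) :=
    (Set.Icc (0 : ℝ) m ×ˢ Set.univ.pi fun _ => Set.Icc 0 1) ∩
      ⋂ k ∈ Set.Iic n, {x | ∑ j, x.2 j * ((j : ℕ).descFactorial k : ℝ) = x.1 ^ k}
  have hK : IsCompact K := by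
    refine (isCompact_Icc.prod (isCompact_univ_pi fun _ => isCompact_Icc)).inter_right
      (isClosed_biInter fun k _ => isClosed_eq ?_ (by fun_prop))
    exact continuous_finsetSum _ fun j _ => by fun_prop
  convert hK.image continuous_fst
  ext r
  refine ⟨fun hr => ?_, ?_⟩
  · have hrm := le_of_mem_admissibleRadii hn hr
    obtain ⟨hr0, c, hc, hmom⟩ := hr
    have hc1 (j : Fin (m + 1)) : c j ≤ 1 := by
      rw [← sum_eq_one_of_descFactorial_moments hmom]
      exact single_le_sum (fun i _ => hc i) (mem_univ j)
    refine ⟨(r, c), ⟨⟨⟨hr0, hrm⟩, fun j _ => ⟨hc j, hc1 j⟩⟩, ?_⟩, rfl⟩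
    simpa using hmom
  · rintro ⟨⟨r, c⟩, ⟨⟨⟨hr0, -⟩, hc⟩, hmom⟩, rfl⟩
    simp only [Set.mem_iInter, Set.mem_Iic, Set.mem_ofPred_eq] at hmom
    exact ⟨hr0, c, fun j => (hc j (Set.mem_univ j)).1, hmom⟩

theorem sSup_admissibleRadii_mem (hn : 1 ≤ n) :
    sSup (admissibleRadii m n) ∈ admissibleRadii m n :=
  (isCompact_admissibleRadii hn).sSup_mem ⟨0, zero_mem_admissibleRadii⟩

theorem sSup_admissibleRadii_pos (hn : 1 ≤ n) (hmn : n ≤ m) :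
    0 < sSup (admissibleRadii m n) :=
  one_half_pos.trans_le
    (le_csSup (isCompact_admissibleRadii hn).bddAbove (one_half_mem_admissibleRadii hmn))

theorem thresholdSet_subset_admissibleRadii {φ : ℝ[X]} (hφ : φ ∈ PiSet m n) :
    {r : ℝ | r = 0 ∨ (0 < r ∧ AbsolutelyMonotonicOn φ (-r) 0)} ⊆ admissibleRadii m n := by
  rintro r (rfl | ⟨hr, hφr⟩)
  · exact zero_mem_admissibleRadii
  · exact mem_admissibleRadii_of_absolutelyMonotonicOn hφ hr hφr

theorem thresholdFactor_le_sSup_admissibleRadii (hn : 1 ≤ n) {φ : ℝ[X]}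
    (hφ : φ ∈ PiSet m n) : thresholdFactor φ ≤ sSup (admissibleRadii m n) :=
  csSup_le_csSup (isCompact_admissibleRadii hn).bddAbove ⟨0, Or.inl rfl⟩
    (thresholdSet_subset_admissibleRadii hφ)

theorem Ropt_eq_sSup_admissibleRadii (hn : 1 ≤ n) (hmn : n ≤ m) :
    Ropt m n = sSup (admissibleRadii m n) := by
  have hbdd : BddAbove (thresholdFactor '' PiSet m n) :=
    ⟨_, Set.forall_mem_image.2 fun φ hφ => thresholdFactor_le_sSup_admissibleRadii hn hφ⟩
  refine le_antisymm (csSup_le ⟨_, Set.mem_image_of_mem _ (truncExp_mem_PiSet hmn)⟩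
    (Set.forall_mem_image.2 fun φ hφ => thresholdFactor_le_sSup_admissibleRadii hn hφ)) ?_
  have hpos := sSup_admissibleRadii_pos hn hmn
  obtain ⟨φ, hφ, hφr⟩ :=
    exists_absolutelyMonotonicOn_of_mem_admissibleRadii hpos (sSup_admissibleRadii_mem hn)
  calc sSup (admissibleRadii m n)
      ≤ thresholdFactor φ :=
        le_csSup ((isCompact_admissibleRadii hn).bddAbove.mono
          (thresholdSet_subset_admissibleRadii hφ)) (Or.inr ⟨hpos, hφr⟩)
    _ ≤ Ropt m n := le_csSup hbdd (Set.mem_image_of_mem _ hφ)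

end AdmissibleRadii

def representableRadii (m n : ℕ) : Set ℝ :=
  {R : ℝ | 0 < R ∧ ∃ s : ℕ, 1 ≤ s ∧ ∃ ms : Fin s → ℕ, StrictMono ms ∧
    (∀ i, ms i ≤ m) ∧ ∃ α : Fin s → ℝ, (∀ i, 0 ≤ α i) ∧
    ∀ x : ℝ, (Hpoly n R).eval x = ∑ i : Fin s, α i * (x - (ms i : ℝ)) ^ n}

theorem mem_representableRadii_iff {m n : ℕ} {R : ℝ} :
    R ∈ representableRadii m n ↔ 0 < R ∧ R ∈ admissibleRadii m n := by
  constructor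
  · rintro ⟨hR, s, -, ms, -, hms, α, hα, hrep⟩
    rw [eval_Hpoly_eq_sum_iff, ← sum_mul_descFactorial_eq_pow_iff] at hrep
    exact ⟨hR, mem_admissibleRadii_of_absolutelyMonotonicOn
      (shiftedPowerSum_mem_PiSet R ms α hR hms hrep) hR
      (absolutelyMonotonicOn_shiftedPowerSum R ms α hR hα)⟩
  · rintro ⟨hR, -, c, hc, hmom⟩
    rw [sum_mul_descFactorial_eq_pow_iff, ← eval_Hpoly_eq_sum_iff] at hmom
    exact ⟨hR, m + 1, m.succ_pos, Fin.val, Fin.val_strictMono,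
      fun j => Nat.lt_succ_iff.1 j.isLt, c, hc, hmom⟩

theorem statement7 (m n : ℕ) (hn : 1 ≤ n) (hmn : n ≤ m) :
    IsGreatest
      {R : ℝ | 0 < R ∧ ∃ s : ℕ, 1 ≤ s ∧ ∃ ms : Fin s → ℕ, StrictMono ms ∧
        (∀ i, ms i ≤ m) ∧ ∃ α : Fin s → ℝ, (∀ i, 0 ≤ α i) ∧
        ∀ x : ℝ, (Hpoly n R).eval x = ∑ i : Fin s, α i * (x - (ms i : ℝ)) ^ n}
      (Ropt m n) := by
  change IsGreatest (representableRadii m n) _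
  rw [Ropt_eq_sSup_admissibleRadii hn hmn]
  refine ⟨mem_representableRadii_iff.2
    ⟨sSup_admissibleRadii_pos hn hmn, sSup_admissibleRadii_mem hn⟩, fun R hR => ?_⟩
  exact le_csSup (isCompact_admissibleRadii hn).bddAbove (mem_representableRadii_iff.1 hR).2
end
end

section
/- For all integers m ≥ n ≥ 1, there exist integers 0 ≤ m_1 < m_2 < … < m_n ≤ m and nonnegative real numbers α_1, α_2, …, α_n such that H_n(x; R_{m,n}) = Σ_{i=1}^{n} α_i (x − m_i)^n for all real x; that is, at R = R_{m,n} the polynomial H_n(·; R_{m,n}) admits such a representation with at most n summands. -/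
open Polynomial

noncomputable section

/-!
Expanding `φ ∈ Π_{m,n}` around `-r`, absolute monotonicity on `[-r, 0]` says that the Taylor
coefficients at `-r` are nonnegative, and the conditions `φ⁽ᵏ⁾(0) = 1` then say that
`(r, r², …, rⁿ)` is a convex combination of the falling-factorial vectors `(j⁽¹⁾, …, j⁽ⁿ⁾)`,
`0 ≤ j ≤ m`. Hence `R_{m,n}` is the last `r` at which this moment curve lies in their convex hull,
so at `R_{m,n}` it lies on the boundary, and Carathéodory's theorem in dimension `n` writes it as
a convex combination of at most `n` vertices. Stirling numbers of the second kind turn the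
falling-factorial moments `Rᵏ` into the power moments `B_s(R)`, and the binomial theorem turns
those into the expansion of `H_n`.
-/

open Finset Module

theorem exists_finset_card_le_finrank_of_mem_convexHull_of_notMem_interior {ι E : Type*}
    [NormedAddCommGroup E] [NormedSpace ℝ E] [FiniteDimensional ℝ E] {v : ι → E} {x : E}
    (hx : x ∈ convexHull ℝ (Set.range v)) (hx' : x ∉ interior (convexHull ℝ (Set.range v))) :
    ∃ t : Finset ι, #t ≤ finrank ℝ E ∧ x ∈ convexHull ℝ (v '' t) := by
  classical
  obtain ⟨κ, _, z, w, hzv, hz, hw0, hw1, rfl⟩ := eq_pos_convex_span_of_mem_convexHull hx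
  choose c hc using fun i => hzv (Set.mem_range_self i)
  refine ⟨univ.image c, card_image_le.trans ?_, ?_⟩
  · -- `finrank + 1` affinely independent points form an affine basis, and positive barycentric
    -- coordinates put `x` in the interior.
    by_contra! hcard
    let b : AffineBasis κ ℝ E := ⟨z, hz, hz.affineSpan_eq_top_iff_card_eq_finrank_add_one.2
      (le_antisymm (hz.card_le_finrank_succ.trans (by gcongr; exact Submodule.finrank_le _))
        hcard)⟩
    refine hx' (interior_mono (convexHull_mono hzv) ?_)
    rw [show z = b from rfl, b.interior_convexHull]
    intro i
    rw [← univ.affineCombination_eq_linear_combination _ _ hw1,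
      b.coord_apply_combination_of_mem (mem_univ i) hw1]
    exact hw0 i
  · exact mem_convexHull_of_exists_fintype w z (fun i => (hw0 i).le) hw1
      (fun i => ⟨c i, by simp, hc i⟩) rfl

theorem mem_convexHull_range_iff_exists_sum_smul {ι E : Type*} [Fintype ι] [AddCommGroup E]
    [Module ℝ E] {v : ι → E} {x : E} :
    x ∈ convexHull ℝ (Set.range v) ↔
      ∃ w : ι → ℝ, (∀ i, 0 ≤ w i) ∧ ∑ i, w i = 1 ∧ ∑ i, w i • v i = x := by
  refine ⟨fun hx => ?_, fun ⟨w, hw0, hw1, hx⟩ =>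
    mem_convexHull_of_exists_fintype w v hw0 hw1 (Set.mem_range_self ·) hx⟩
  rw [convexHull_range_eq_exists_affineCombination] at hx
  obtain ⟨s, w, hw0, hw1, rfl⟩ := hx
  have hw1' : ∑ i, Set.indicator (↑s) w i = 1 := by
    rw [sum_indicator_subset _ (subset_univ s), hw1]
  refine ⟨Set.indicator (↑s) w, fun i => ?_, hw1', ?_⟩
  · by_cases hi : i ∈ s <;> simp [hi, hw0]
  · rw [s.affineCombination_indicator_subset _ _ (subset_univ s),
      univ.affineCombination_eq_linear_combination _ _ hw1']

theorem iterate_eq_sum_stirlingSecond_smul {M : Type*} [AddCommMonoid M] (D : M →+ M)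
    (e : ℕ → M) (he : ∀ k, D (e k) = e (k + 1) + k • e k) (s : ℕ) :
    D^[s] (e 0) = ∑ k ∈ range (s + 1), Nat.stirlingSecond s k • e k := by
  induction s with
  | zero => simp
  | succ s ih =>
    have hshift : ∑ k ∈ range (s + 1), (Nat.stirlingSecond s k * k) • e k =
        ∑ k ∈ range (s + 1), (Nat.stirlingSecond s (k + 1) * (k + 1)) • e (k + 1) := by
      rw [sum_range_succ', sum_range_succ, Nat.stirlingSecond_eq_zero_of_lt (lt_add_one s)]
      simp
    rw [Function.iterate_succ_apply', ih, map_sum]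
    simp only [map_nsmul, he, smul_add, sum_add_distrib, smul_smul, hshift]
    rw [sum_range_succ' _ (s + 1), ← sum_add_distrib]
    simp [Nat.stirlingSecond_succ_succ, add_smul, mul_comm, add_comm]

theorem pow_eq_sum_stirlingSecond_mul_descPochhammer_eval {R : Type*} [CommRing R] (y : R)
    (s : ℕ) :
    y ^ s = ∑ k ∈ range (s + 1), Nat.stirlingSecond s k * (descPochhammer R k).eval y := by
  have hstep : ∀ k, y * (descPochhammer R k).eval y =
      (descPochhammer R (k + 1)).eval y + k • (descPochhammer R k).eval y := fun k => by
    rw [descPochhammer_succ_eval, nsmul_eq_mul]; ring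
  simpa [nsmul_eq_mul] using
    iterate_eq_sum_stirlingSecond_smul (AddMonoidHom.mulLeft y) _ hstep s

theorem touchard_eq_sum_stirlingSecond (s : ℕ) :
    touchard s = ∑ k ∈ range (s + 1), Nat.stirlingSecond s k • (X ^ k : ℝ[X]) := by
  let D : ℝ[X] →+ ℝ[X] := (LinearMap.mulLeft ℝ X ∘ₗ (LinearMap.id + derivative)).toAddMonoidHom
  have hD : ∀ k, D (X ^ k) = X ^ (k + 1) + k • X ^ k := by
    rintro (_ | k)
    · simp [D]
    · simp [D, nsmul_eq_mul]; ring
  rw [← iterate_eq_sum_stirlingSecond_smul D _ hD s, pow_zero]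
  induction s with
  | zero => rfl
  | succ s ih => rw [Function.iterate_succ_apply', ← ih]; rfl

theorem touchard_eval_eq_sum_stirlingSecond (s : ℕ) (r : ℝ) :
    (touchard s).eval r = ∑ k ∈ range (s + 1), Nat.stirlingSecond s k * r ^ k := by
  simp [touchard_eq_sum_stirlingSecond, eval_finsetSum, nsmul_eq_mul]

theorem sum_mul_pow_eq_touchard_eval {ι : Type*} [Fintype ι] {n : ℕ} {x : ι → ℕ} {w : ι → ℝ}
    {r : ℝ} (h : ∀ k ≤ n, ∑ i, w i * (x i).descFactorial k = r ^ k) {s : ℕ} (hs : s ≤ n) :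
    ∑ i, w i * (x i : ℝ) ^ s = (touchard s).eval r := by
  simp_rw [pow_eq_sum_stirlingSecond_mul_descPochhammer_eval, descPochhammer_eval_eq_descFactorial,
    mul_sum, touchard_eval_eq_sum_stirlingSecond]
  rw [sum_comm]
  refine sum_congr rfl fun k hk => ?_
  rw [← h k ((Nat.lt_succ_iff.1 (mem_range.1 hk)).trans hs), mul_sum]
  exact sum_congr rfl fun i _ => by ring

theorem Hpoly_eval_eq_sum_of_moments {ι : Type*} [Fintype ι] {n : ℕ} {R : ℝ} {α y : ι → ℝ}
    (h : ∀ s ≤ n, ∑ i, α i * y i ^ s = (touchard s).eval R) (x : ℝ) :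
    (Hpoly n R).eval x = ∑ i, α i * (x - y i) ^ n := by
  calc (Hpoly n R).eval x
      = ∑ k ∈ range (n + 1), ∑ i, α i * (x ^ k * (-y i) ^ (n - k) * n.choose k) := by
        simp only [Hpoly, eval_finsetSum, eval_mul, eval_C, eval_pow, eval_X]
        refine sum_congr rfl fun k _ => ?_
        rw [← h (n - k) (Nat.sub_le n k), mul_sum, sum_mul]
        exact sum_congr rfl fun i _ => by rw [neg_pow]; ring
    _ = ∑ i, α i * (x - y i) ^ n := by
        rw [sum_comm]
        simp_rw [← mul_sum, sub_eq_add_neg, add_pow]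

theorem Polynomial.iterate_derivative_taylor_s8 {R : Type*} [CommSemiring R] (f : R[X]) (r : R)
    (k : ℕ) : derivative^[k] (taylor r f) = taylor r (derivative^[k] f) := by
  induction k with
  | zero => rfl
  | succ k ih =>
    rw [Function.iterate_succ_apply', ih, Function.iterate_succ_apply', taylor_apply,
      taylor_apply, derivative_comp]
    simp

theorem Polynomial.factorial_mul_coeff_taylor {R : Type*} [CommSemiring R] (f : R[X]) (r : R)
    (j : ℕ) : (j.factorial : R) * (taylor r f).coeff j = (derivative^[j] f).eval r := by
  rw [taylor_coeff, ← factorial_smul_hasseDeriv]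
  simp [nsmul_eq_mul]

theorem Polynomial.eval_nonneg_of_coeff_nonneg_s8 {R : Type*} [CommSemiring R] [PartialOrder R]
    [IsOrderedRing R] {f : R[X]} (hf : ∀ j, 0 ≤ f.coeff j) {x : R} (hx : 0 ≤ x) :
    0 ≤ f.eval x := by
  rw [eval_eq_sum_range]
  exact sum_nonneg fun j _ => mul_nonneg (hf j) (pow_nonneg hx j)

theorem Polynomial.pow_mul_eval_iterate_derivative {R : Type*} [CommSemiring R] {f : R[X]}
    {m : ℕ} (hf : f.natDegree ≤ m) (k : ℕ) (r : R) :
    r ^ k * (derivative^[k] f).eval r =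
      ∑ j : Fin (m + 1), f.coeff j * r ^ (j : ℕ) * (j : ℕ).descFactorial k := by
  conv_lhs => rw [f.as_sum_range' (m + 1) (Nat.lt_succ_of_le hf)]
  rw [iterate_derivative_sum, eval_finsetSum, mul_sum, ← Fin.sum_univ_eq_sum_range]
  refine sum_congr rfl fun j _ => ?_
  rw [← C_mul_X_pow_eq_monomial, iterate_derivative_C_mul, iterate_derivative_X_pow_eq_C_mul]
  rcases le_or_gt k j with h | h
  · simp only [eval_mul, eval_C, eval_pow, eval_X]
    rw [← Nat.sub_add_cancel h]
    simp only [Nat.add_sub_cancel, pow_add]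
    ring
  · simp [Nat.descFactorial_eq_zero_iff_lt.2 h]

def IsThreshold (m n : ℕ) (r : ℝ) : Prop :=
  ∃ φ ∈ PiSet m n, AbsolutelyMonotonicOn φ (-r) 0

theorem IsThreshold.mono {m n : ℕ} {r r' : ℝ} (h : IsThreshold m n r) (hr : r' ≤ r) :
    IsThreshold m n r' := by
  obtain ⟨φ, hφ, hAM⟩ := h
  exact ⟨φ, hφ, fun k x hx => hAM k x ⟨by linarith [hx.1], hx.2⟩⟩

/-- The weights are the scaled Taylor coefficients `d j = φ⁽ʲ⁾(-r) rʲ / j!` of `φ` at `-r`. -/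
theorem IsThreshold.exists_descFactorial_moments {m n : ℕ} {r : ℝ} (h : IsThreshold m n r)
    (hr : 0 ≤ r) : ∃ d : Fin (m + 1) → ℝ, (∀ j, 0 ≤ d j) ∧
      ∀ k ≤ n, ∑ j, d j * (j : ℕ).descFactorial k = r ^ k := by
  obtain ⟨φ, ⟨hdeg, hval⟩, hAM⟩ := h
  set ψ := taylor (-r) φ
  have hψ : taylor r ψ = φ := by simp [ψ, taylor_taylor]
  have hcoeff : ∀ j, 0 ≤ ψ.coeff j := fun j => by
    refine nonneg_of_mul_nonneg_right ?_ (Nat.cast_pos.2 j.factorial_pos)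
    rw [φ.factorial_mul_coeff_taylor (-r) j]
    exact hAM j (-r) ⟨le_rfl, by linarith⟩
  refine ⟨fun j => ψ.coeff j * r ^ (j : ℕ), fun j => mul_nonneg (hcoeff j) (by positivity),
    fun k hk => ?_⟩
  have heval : (derivative^[k] ψ).eval r = (derivative^[k] φ).eval 0 := by
    conv_rhs => rw [← hψ, iterate_derivative_taylor_s8, taylor_eval, zero_add]
  beta_reduce
  rw [← pow_mul_eval_iterate_derivative (by rwa [natDegree_taylor]), heval, hval k hk, mul_one]

theorem isThreshold_of_descFactorial_moments {m n : ℕ} {r : ℝ} (hr : 0 < r)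
    {d : Fin (m + 1) → ℝ} (hd : ∀ j, 0 ≤ d j)
    (hmom : ∀ k ≤ n, ∑ j, d j * (j : ℕ).descFactorial k = r ^ k) : IsThreshold m n r := by
  set ψ : ℝ[X] := ∑ j : Fin (m + 1), C (d j / r ^ (j : ℕ)) * X ^ (j : ℕ)
  have hcoeff : ∀ j, ψ.coeff j = if h : j < m + 1 then d ⟨j, h⟩ / r ^ j else 0 := fun j => by
    simp only [ψ, finsetSum_coeff, coeff_C_mul_X_pow]
    split_ifs with h
    · rw [sum_eq_single ⟨j, h⟩] <;> simp +contextual [Fin.ext_iff, eq_comm]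
    · exact sum_eq_zero fun i _ => if_neg (by omega)
  have hcoeff_nonneg : ∀ j, 0 ≤ ψ.coeff j := fun j => by
    rw [hcoeff]; split_ifs <;> first | positivity | exact div_nonneg (hd _) (by positivity)
  have hdeg : ψ.natDegree ≤ m :=
    natDegree_sum_le_of_forall_le _ _ fun j _ => (natDegree_C_mul_X_pow_le _ _).trans j.is_le
  refine ⟨taylor r ψ, ⟨by rwa [natDegree_taylor], fun k hk => ?_⟩, fun k x hx => ?_⟩
  · have := pow_mul_eval_iterate_derivative hdeg k r
    simp only [hcoeff, Fin.is_lt, dif_pos, div_mul_cancel₀ _ (pow_ne_zero _ hr.ne'),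
      hmom k hk] at this
    rw [iterate_derivative_taylor_s8, taylor_eval, zero_add]
    exact mul_left_cancel₀ (pow_ne_zero k hr.ne') (this.trans (mul_one _).symm)
  · rw [iterate_derivative_taylor_s8, taylor_eval]
    refine eval_nonneg_of_coeff_nonneg_s8 (fun j => ?_) (by linarith [hx.1])
    rw [coeff_iterate_derivative]
    exact nsmul_nonneg (hcoeff_nonneg _) _

theorem IsThreshold.le_natCast {m n : ℕ} {r : ℝ} (h : IsThreshold m n r) (hr : 0 ≤ r)
    (hn : 1 ≤ n) : r ≤ m := by
  obtain ⟨d, hd, hmom⟩ := h.exists_descFactorial_moments hr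
  have hsum : ∑ j, d j = 1 := by simpa using hmom 0 n.zero_le
  calc r = ∑ j, d j * (j : ℕ) := by simpa using (hmom 1 hn).symm
    _ ≤ ∑ j, d j * m := sum_le_sum fun j _ => mul_le_mul_of_nonneg_left
        (by exact_mod_cast j.is_le) (hd j)
    _ = m := by rw [← sum_mul, hsum, one_mul]

theorem thresholdFactor_le_natCast {m n : ℕ} (hn : 1 ≤ n) {φ : ℝ[X]} (hφ : φ ∈ PiSet m n) :
    thresholdFactor φ ≤ m := by
  refine Real.sSup_le ?_ m.cast_nonneg
  rintro r (rfl | ⟨hr, hAM⟩)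
  · exact m.cast_nonneg
  · exact IsThreshold.le_natCast ⟨φ, hφ, hAM⟩ hr.le hn

theorem IsThreshold.le_Ropt {m n : ℕ} {r : ℝ} (h : IsThreshold m n r) (hr : 0 < r)
    (hn : 1 ≤ n) : r ≤ Ropt m n := by
  obtain ⟨φ, hφ, hAM⟩ := h
  have hbdd : BddAbove (thresholdFactor '' PiSet m n) := by
    refine ⟨m, ?_⟩
    rintro _ ⟨ψ, hψ, rfl⟩
    exact thresholdFactor_le_natCast hn hψ
  refine le_trans ?_ (le_csSup hbdd ⟨φ, hφ, rfl⟩)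
  refine le_csSup ⟨m, ?_⟩ (Or.inr ⟨hr, hAM⟩)
  rintro s (rfl | ⟨hs, hAM'⟩)
  · exact m.cast_nonneg
  · exact IsThreshold.le_natCast ⟨φ, hφ, hAM'⟩ hs.le hn

theorem exists_isThreshold_of_lt_Ropt {m n : ℕ} {q : ℝ} (hq : 0 ≤ q) (h : q < Ropt m n) :
    ∃ r, q < r ∧ IsThreshold m n r := by
  by_contra! hcon
  refine h.not_ge (Real.sSup_le ?_ hq)
  rintro _ ⟨φ, hφ, rfl⟩
  refine Real.sSup_le ?_ hq
  rintro r (rfl | ⟨-, hAM⟩)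
  · exact hq
  · exact le_of_not_gt fun hqr => hcon r hqr ⟨φ, hφ, hAM⟩

theorem Ropt_nonneg (m n : ℕ) : 0 ≤ Ropt m n := by
  refine Real.sSup_nonneg ?_
  rintro _ ⟨φ, -, rfl⟩
  refine Real.sSup_nonneg ?_
  rintro r (rfl | ⟨hr, -⟩)
  exacts [le_rfl, hr.le]

/-- Coordinate `k` carries the falling factorial of order `k + 1`: the order-`0` moment condition
is the normalisation `∑ w = 1` of a convex combination. -/
def descVec (n j : ℕ) : Fin n → ℝ := fun k => (j.descFactorial (k + 1) : ℝ)

def powVec (n : ℕ) (r : ℝ) : Fin n → ℝ := fun k => r ^ ((k : ℕ) + 1)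

theorem continuous_powVec (n : ℕ) : Continuous (powVec n) :=
  continuous_pi fun _ => continuous_pow _

theorem powVec_mem_convexHull_iff {ι : Type*} [Fintype ι] (x : ι → ℕ) (n : ℕ) (r : ℝ) :
    powVec n r ∈ convexHull ℝ (Set.range fun i => descVec n (x i)) ↔
      ∃ w : ι → ℝ, (∀ i, 0 ≤ w i) ∧ ∀ k ≤ n, ∑ i, w i * (x i).descFactorial k = r ^ k := by
  simp only [mem_convexHull_range_iff_exists_sum_smul, funext_iff, Finset.sum_apply,
    Pi.smul_apply, descVec, powVec, smul_eq_mul]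
  refine exists_congr fun w => and_congr_right fun _ => ⟨fun ⟨hw1, hw⟩ k hk => ?_, fun h => ?_⟩
  · rcases k with _ | k
    · simpa using hw1
    · exact hw ⟨k, hk⟩
  · exact ⟨by simpa using h 0 n.zero_le, fun k => h (k + 1) k.is_lt⟩

def descHull (m n : ℕ) : Set (Fin n → ℝ) :=
  convexHull ℝ (Set.range fun j : Fin (m + 1) => descVec n j)

theorem isThreshold_iff_powVec_mem_descHull {m n : ℕ} {r : ℝ} (hr : 0 < r) :
    IsThreshold m n r ↔ powVec n r ∈ descHull m n := by
  rw [descHull, powVec_mem_convexHull_iff]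
  exact ⟨fun h => h.exists_descFactorial_moments hr.le,
    fun ⟨d, hd, hmom⟩ => isThreshold_of_descFactorial_moments hr hd hmom⟩

theorem powVec_Ropt_mem_descHull (m n : ℕ) : powVec n (Ropt m n) ∈ descHull m n := by
  have hclosed : IsClosed (descHull m n) := (Set.finite_range _).isClosed_convexHull ℝ
  have h0 : powVec n 0 ∈ descHull m n := subset_convexHull ℝ _ ⟨0, by ext; simp [descVec, powVec]⟩
  rcases (Ropt_nonneg m n).eq_or_lt with hR | hR
  · rwa [← hR]
  have hR_mem : Ropt m n ∈ closure (Set.Ico 0 (Ropt m n)) := by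
    rw [closure_Ico hR.ne]
    exact ⟨hR.le, le_rfl⟩
  refine (hclosed.preimage (continuous_powVec n)).closure_subset_iff.2 (fun r hr => ?_) hR_mem
  rcases hr.1.eq_or_lt with rfl | hr0
  · exact h0
  obtain ⟨r', hrr', hr'⟩ := exists_isThreshold_of_lt_Ropt hr0.le hr.2
  exact (isThreshold_iff_powVec_mem_descHull hr0).1 (hr'.mono hrr'.le)

theorem powVec_Ropt_notMem_interior_descHull {m n : ℕ} (hn : 1 ≤ n) :
    powVec n (Ropt m n) ∉ interior (descHull m n) := by
  intro h
  have hev : ∀ᶠ r in nhdsWithin (Ropt m n) (Set.Ioi (Ropt m n)),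
      powVec n r ∈ interior (descHull m n) :=
    nhdsWithin_le_nhds <|
      (continuous_powVec n).continuousAt.eventually_mem (isOpen_interior.mem_nhds h)
  obtain ⟨r, hmem, hr⟩ := (hev.and self_mem_nhdsWithin).exists
  have hr0 : 0 < r := (Ropt_nonneg m n).trans_lt hr
  have := ((isThreshold_iff_powVec_mem_descHull hr0).2 (interior_subset hmem)).le_Ropt hr0 hn
  exact hr.not_ge this

theorem statement8 (m n : ℕ) (hn : 1 ≤ n) (hmn : n ≤ m) :
    ∃ ms : Fin n → ℕ, StrictMono ms ∧ (∀ i, ms i ≤ m) ∧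
      ∃ α : Fin n → ℝ, (∀ i, 0 ≤ α i) ∧
        ∀ x : ℝ, (Hpoly n (Ropt m n)).eval x = ∑ i : Fin n, α i * (x - (ms i : ℝ)) ^ n := by
  obtain ⟨t, ht, hmem⟩ := exists_finset_card_le_finrank_of_mem_convexHull_of_notMem_interior
    (powVec_Ropt_mem_descHull m n) (powVec_Ropt_notMem_interior_descHull hn)
  rw [finrank_fin_fun] at ht
  obtain ⟨t', htt', -, ht'⟩ :=
    exists_subsuperset_card_eq (subset_univ t) ht (by simpa using hmn.trans m.le_succ)
  let e := t'.orderEmbOfFin ht'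
  have hmem' : powVec n (Ropt m n) ∈ convexHull ℝ (Set.range fun i => descVec n (e i)) := by
    rw [← Function.comp_def (fun j : Fin (m + 1) => descVec n j) e, Set.range_comp,
      range_orderEmbOfFin]
    exact convexHull_mono (Set.image_mono htt') hmem
  obtain ⟨α, hα, hmom⟩ := (powVec_mem_convexHull_iff (fun i => e i) n _).1 hmem'
  exact ⟨fun i => e i, fun i j hij => e.strictMono hij, fun i => (e i).is_le, α, hα,
    Hpoly_eval_eq_sum_of_moments fun s hs => sum_mul_pow_eq_touchard_eval hmom hs⟩
end
end

section
/- For every nonnegative integer n and every real number R > 0, the following two identities hold: (1) t^n = Σ_{j=0}^{n} (B_n^{(j)}(R)/j!) · C_j(t,R) as an identity of polynomials in t, where B_n^{(j)} denotes the j-th derivative of the Touchard polynomial B_n; and (2) ∫ t^n dμ_R(t) = B_n(R), i.e., e^{−R} Σ_{j=0}^{∞} j^n R^j/j! = B_n(R). -/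
open Polynomial

noncomputable section

/-- The monic Poisson–Charlier polynomials `C_n(·, R)`. -/
def charlier (R : ℝ) : ℕ → Polynomial ℝ
  | 0 => 1
  | 1 => Polynomial.X - Polynomial.C R
  | (n + 2) =>
      (Polynomial.X - Polynomial.C (R + ((n : ℝ) + 1))) * charlier R (n + 1) -
        Polynomial.C (((n : ℝ) + 1) * R) * charlier R n


/-!
Both identities come from one mechanism. If polynomials `P k` satisfy the three-term recurrence
`t P_k = P_{k+1} + (c + k) P_k + k c P_{k-1}`, then the linear map `Φ_P : x^k ↦ P_k` satisfies
`Φ_P ((x + c) (p + p')) = t Φ_P p`, which is the Touchard recurrence `B_{n+1} = x (B_n + B_n')`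
after the shift `x ↦ x + c`. So a linear map `L` with `L 1 = 1` and `L (x (q + q')) = t L q`
sends `B_n` to `t^n`.

(1) The Charlier polynomials satisfy the recurrence with `c = R`, so `q ↦ Φ_C (q (x + R))`, i.e.
`q ↦ Σ_j q^{(j)}(R) / j! C_j`, sends `B_n` to `t^n`.
(2) The falling factorials `t (t - 1) ⋯ (t - k + 1)` (the Charlier polynomials at `R = 0`) satisfy
it with `c = 0`, so `t^n = Σ_k b_{n,k} t (t - 1) ⋯ (t - k + 1)` where `B_n = Σ_k b_{n,k} x^k`.
Summing termwise against `R^j / j!` with `Σ_j j (j - 1) ⋯ (j - k + 1) R^j / j! = R^k e^R`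
gives `Σ_j j^n R^j / j! = e^R B_n(R)`.
-/

open scoped Nat

namespace Polynomial

section LinearOfPowers

variable {A : Type*} [CommRing A] (P : ℕ → A[X])

def linearOfPowers : A[X] →ₗ[A] A[X] :=
  lsum fun k => LinearMap.toSpanSingleton A A[X] (P k)

theorem linearOfPowers_C_mul_X_pow (a : A) (k : ℕ) :
    linearOfPowers P (C a * X ^ k) = C a * P k := by
  rw [C_mul_X_pow_eq_monomial, linearOfPowers, lsum_apply, sum_monomial_index _ _ (by simp),
    LinearMap.toSpanSingleton_apply, smul_eq_C_mul]

theorem linearOfPowers_X_pow (k : ℕ) : linearOfPowers P (X ^ k) = P k := by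
  simpa using linearOfPowers_C_mul_X_pow P 1 k

theorem linearOfPowers_eq_sum_range {p : A[X]} {m : ℕ} (hp : p.natDegree < m) :
    linearOfPowers P p = ∑ k ∈ Finset.range m, C (p.coeff k) * P k := by
  conv_lhs => rw [as_sum_range' p m hp]
  simp only [map_sum, ← C_mul_X_pow_eq_monomial, linearOfPowers_C_mul_X_pow]

variable {P} {c : A}

-- At `k = 0` the last term of `hP` has coefficient `0`, so the truncated `k - 1` is harmless.
theorem linearOfPowers_mul_X_pow_add_derivative
    (hP : ∀ k, X * P k = P (k + 1) + C (c + k) * P k + C (k * c) * P (k - 1)) (k : ℕ) :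
    linearOfPowers P ((X + C c) * (X ^ k + derivative (X ^ k))) = X * P k := by
  rcases k with _ | k
  · have h : (X + C c) * (X ^ 0 + derivative (X ^ 0 : A[X])) = C 1 * X ^ 1 + C c * X ^ 0 := by
      simp
    rw [h, map_add, linearOfPowers_C_mul_X_pow, linearOfPowers_C_mul_X_pow, hP 0]
    simp
  · have h : (X + C c) * (X ^ (k + 1) + derivative (X ^ (k + 1))) =
        C 1 * X ^ (k + 2) + C (c + (k + 1 : ℕ)) * X ^ (k + 1) + C ((k + 1 : ℕ) * c) * X ^ k := by
      rw [derivative_X_pow]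
      simp only [C_1, C_add, C_mul, Nat.cast_add, Nat.cast_one, add_tsub_cancel_right]
      ring
    rw [h, map_add, map_add, linearOfPowers_C_mul_X_pow, linearOfPowers_C_mul_X_pow,
      linearOfPowers_C_mul_X_pow, hP (k + 1)]
    simp

theorem linearOfPowers_mul_add_derivative
    (hP : ∀ k, X * P k = P (k + 1) + C (c + k) * P k + C (k * c) * P (k - 1)) (p : A[X]) :
    linearOfPowers P ((X + C c) * (p + derivative p)) = X * linearOfPowers P p := by
  induction p using Polynomial.induction_on' with
  | add p q hp hq => rw [derivative_add, add_add_add_comm, mul_add, map_add, map_add, hp, hq, mul_add]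
  | monomial k a =>
    rw [← C_mul_X_pow_eq_monomial, linearOfPowers_C_mul_X_pow, derivative_C_mul, ← mul_add,
      mul_left_comm, ← smul_eq_C_mul, map_smul, linearOfPowers_mul_X_pow_add_derivative hP,
      smul_eq_C_mul, mul_left_comm]

end LinearOfPowers

theorem derivative_taylor {A : Type*} [CommRing A] (r : A) (p : A[X]) :
    derivative (taylor r p) = taylor r (derivative p) := by
  rw [taylor_apply, taylor_apply, derivative_comp, derivative_add, derivative_X, derivative_C,
    add_zero, one_mul]

theorem eval_hasseDeriv {K : Type*} [Field K] [CharZero K] (k : ℕ) (f : K[X]) (r : K) :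
    (hasseDeriv k f).eval r = (derivative^[k] f).eval r / k ! := by
  rw [← factorial_smul_hasseDeriv, LinearMap.smul_apply, eval_smul, nsmul_eq_mul,
    mul_div_cancel_left₀ _ (Nat.cast_ne_zero.mpr (Nat.factorial_ne_zero k))]

theorem X_mul_descPochhammer {A : Type*} [CommRing A] (k : ℕ) :
    X * descPochhammer A k = descPochhammer A (k + 1) + C (k : A) * descPochhammer A k := by
  rw [descPochhammer_succ_right, ← C_eq_natCast]
  ring

end Polynomial

theorem map_touchard_eq_X_pow (L : ℝ[X] →ₗ[ℝ] ℝ[X]) (h1 : L 1 = 1)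
    (hL : ∀ p, L (X * (p + derivative p)) = X * L p) (n : ℕ) : L (touchard n) = X ^ n := by
  induction n with
  | zero => exact h1
  | succ n ih => rw [touchard, hL, ih, pow_succ']

theorem natDegree_touchard_le (n : ℕ) : (touchard n).natDegree ≤ n := by
  induction n with
  | zero => simp [touchard]
  | succ n ih =>
    calc (touchard (n + 1)).natDegree
        ≤ (X : ℝ[X]).natDegree + (touchard n + derivative (touchard n)).natDegree :=
          natDegree_mul_le
      _ ≤ 1 + n := add_le_add natDegree_X_le <| natDegree_add_le_of_degree_le ih <|
          (natDegree_derivative_le _).trans (by omega)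
      _ = n + 1 := add_comm 1 n

theorem X_mul_charlier (R : ℝ) (k : ℕ) :
    X * charlier R k = charlier R (k + 1) + C (R + k) * charlier R k
      + C (k * R) * charlier R (k - 1) := by
  rcases k with _ | k
  · simp [charlier]
  · simp only [charlier]
    push_cast
    ring

theorem linearOfPowers_charlier_taylor_touchard (R : ℝ) (n : ℕ) :
    linearOfPowers (charlier R) (taylor R (touchard n)) = X ^ n := by
  refine map_touchard_eq_X_pow (linearOfPowers (charlier R) ∘ₗ taylor R) ?_ (fun p ↦ ?_) n
  · simpa [charlier] using linearOfPowers_X_pow (charlier R) 0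
  · rw [LinearMap.comp_apply, LinearMap.comp_apply, taylor_mul, taylor_X, map_add,
      ← derivative_taylor, linearOfPowers_mul_add_derivative (X_mul_charlier R)]

theorem X_pow_eq_sum_charlier (R : ℝ) (n : ℕ) :
    (X : ℝ[X]) ^ n = ∑ j ∈ Finset.range (n + 1),
      C ((derivative^[j] (touchard n)).eval R / j !) * charlier R j := by
  have hdeg : (taylor R (touchard n)).natDegree < n + 1 := by
    rw [natDegree_taylor]
    exact Nat.lt_succ_of_le (natDegree_touchard_le n)
  rw [← linearOfPowers_charlier_taylor_touchard R n, linearOfPowers_eq_sum_range _ hdeg]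
  simp only [taylor_coeff, eval_hasseDeriv]

theorem linearOfPowers_descPochhammer_touchard (n : ℕ) :
    linearOfPowers (descPochhammer ℝ) (touchard n) = X ^ n := by
  refine map_touchard_eq_X_pow _ ?_ (fun p ↦ ?_) n
  · simpa using linearOfPowers_X_pow (descPochhammer ℝ) 0
  · simpa using linearOfPowers_mul_add_derivative (c := 0)
      (fun k ↦ by simp [X_mul_descPochhammer]) p

theorem hasSum_eval_descPochhammer (R : ℝ) (k : ℕ) :
    HasSum (fun j : ℕ ↦ (descPochhammer ℝ k).eval (j : ℝ) * R ^ j / j !) (R ^ k * Real.exp R) := by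
  rw [← hasSum_nat_add_iff' k]
  have hlow : ∑ j ∈ Finset.range k, (descPochhammer ℝ k).eval (j : ℝ) * R ^ j / j ! = 0 :=
    Finset.sum_eq_zero fun j hj ↦ by
      rw [descPochhammer_eval_eq_descFactorial,
        Nat.descFactorial_eq_zero_iff_lt.mpr (Finset.mem_range.mp hj)]
      simp
  rw [hlow, sub_zero, Real.exp_eq_exp_ℝ]
  refine ((NormedSpace.expSeries_div_hasSum_exp R).mul_left (R ^ k)).congr_fun fun j ↦ ?_
  have hfac := Nat.factorial_mul_descFactorial (Nat.le_add_left k j)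
  rw [Nat.add_sub_cancel] at hfac
  rw [descPochhammer_eval_eq_descFactorial, ← hfac]
  push_cast
  field_simp
  ring

theorem hasSum_eval_linearOfPowers_descPochhammer (R : ℝ) (p : ℝ[X]) :
    HasSum (fun j : ℕ ↦ (linearOfPowers (descPochhammer ℝ) p).eval (j : ℝ) * R ^ j / j !)
      (Real.exp R * p.eval R) := by
  induction p using Polynomial.induction_on' with
  | add p q hp hq => simpa only [map_add, eval_add, add_mul, add_div, mul_add] using hp.add hq
  | monomial k a =>
    have hvalue : Real.exp R * (monomial k a).eval R = a * (R ^ k * Real.exp R) := by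
      rw [eval_monomial]
      ring
    rw [hvalue]
    refine ((hasSum_eval_descPochhammer R k).mul_left a).congr_fun fun j ↦ ?_
    rw [← C_mul_X_pow_eq_monomial, linearOfPowers_C_mul_X_pow, eval_mul, eval_C]
    ring

theorem statement9_general (n : ℕ) (R : ℝ) :
    ((Polynomial.X : Polynomial ℝ) ^ n =
      ∑ j ∈ Finset.range (n + 1),
        Polynomial.C ((Polynomial.derivative^[j] (touchard n)).eval R / (Nat.factorial j : ℝ)) *
          charlier R j) ∧
    (∑' j : ℕ, Real.exp (-R) * (j : ℝ) ^ n * R ^ j / (Nat.factorial j : ℝ)) =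
      (touchard n).eval R := by
  refine ⟨X_pow_eq_sum_charlier R n, ?_⟩
  have h := (hasSum_eval_linearOfPowers_descPochhammer R (touchard n)).mul_left (Real.exp (-R))
  simp only [linearOfPowers_descPochhammer_touchard, eval_X_pow, ← mul_div_assoc, ← mul_assoc] at h
  rw [h.tsum_eq, ← Real.exp_add, neg_add_cancel, Real.exp_zero, one_mul]

theorem statement9 (n : ℕ) (R : ℝ) (hR : 0 < R) :
    ((Polynomial.X : Polynomial ℝ) ^ n =
      ∑ j ∈ Finset.range (n + 1),
        Polynomial.C ((Polynomial.derivative^[j] (touchard n)).eval R / (Nat.factorial j : ℝ)) *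
          charlier R j) ∧
    (∑' j : ℕ, Real.exp (-R) * (j : ℝ) ^ n * R ^ j / (Nat.factorial j : ℝ)) =
      (touchard n).eval R :=
  statement9_general n R
end
end

section
/- Let R > 0 be a real number, P an admissible polynomial, and j a nonnegative integer. Then (∫ t·P(t) dμ_R(t)) / (∫ P(t) dμ_R(t)) ≤ (∫ t·P(t+j) dμ_R(t)) / (∫ P(t+j) dμ_R(t)) + j. (Both denominators are strictly positive, since P and t ↦ P(t+j) are admissible and μ_R has infinite support on the nonnegative integers.) -/
open Polynomial

noncomputable section

/-- A nonzero real polynomial is admissible if it is nonnegative on all the integers. -/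
def Admissible (P : Polynomial ℝ) : Prop :=
  P ≠ 0 ∧ ∀ j : ℤ, 0 ≤ P.eval (j : ℝ)

lemma pc_summable (R : ℝ) (hR : 0 < R) (f : Polynomial ℝ) :
    Summable (fun n : ℕ => Real.exp (-R) * f.eval (n : ℝ) * R ^ n / (Nat.factorial n : ℝ)) := by
  induction f using Polynomial.induction_on' with
  | add p q hp hq =>
      refine (hp.add hq).congr fun n => ?_
      simp only [Polynomial.eval_add]
      ring
  | monomial k c =>
      have key : Summable (fun n : ℕ => (n : ℝ) ^ k * R ^ n / (Nat.factorial n : ℝ)) := by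
        have hbound : ∀ n : ℕ, (n : ℝ) ^ k * R ^ n / (Nat.factorial n : ℝ)
            ≤ (Nat.factorial k : ℝ) * ((Real.exp 1 * R) ^ n / (Nat.factorial n : ℝ)) := by
          intro n
          have h1 : ((n : ℝ)) ^ k / (Nat.factorial k : ℝ) ≤ Real.exp n := by
            calc ((n : ℝ)) ^ k / (Nat.factorial k : ℝ)
                ≤ ∑ i ∈ Finset.range (k + 1), (n : ℝ) ^ i / (Nat.factorial i : ℝ) := by
                  refine Finset.single_le_sum (f := fun i => (n : ℝ) ^ i / (Nat.factorial i : ℝ))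
                    (fun i _ => by positivity) (Finset.self_mem_range_succ k)
              _ ≤ Real.exp n := Real.sum_le_exp_of_nonneg (by positivity) _
          have hk : (0:ℝ) < (Nat.factorial k : ℝ) := by positivity
          have h2 : (n : ℝ) ^ k ≤ (Nat.factorial k : ℝ) * Real.exp n := by
            rw [div_le_iff₀ hk] at h1; linarith [h1]
          have hexp : Real.exp (n : ℝ) = Real.exp 1 ^ n := by
            rw [← Real.exp_nat_mul]; simp
          have hfn : (0:ℝ) < (Nat.factorial n : ℝ) := by positivity
          have hnum : (n : ℝ) ^ k * R ^ n ≤ (Nat.factorial k : ℝ) * (Real.exp 1 * R) ^ n := by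
            rw [mul_pow, ← hexp, ← mul_assoc]
            exact mul_le_mul_of_nonneg_right h2 (by positivity)
          calc (n : ℝ) ^ k * R ^ n / (Nat.factorial n : ℝ)
              ≤ ((Nat.factorial k : ℝ) * (Real.exp 1 * R) ^ n) / (Nat.factorial n : ℝ) := by
                gcongr
            _ = (Nat.factorial k : ℝ) * ((Real.exp 1 * R) ^ n / (Nat.factorial n : ℝ)) := by
                ring
        refine Summable.of_nonneg_of_le (fun n => by positivity) hbound ?_
        exact ((Real.summable_pow_div_factorial (Real.exp 1 * R)).mul_left _)
      refine ((key.mul_left (Real.exp (-R) * c)).congr fun n => ?_)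
      simp only [Polynomial.eval_monomial]
      ring

lemma pc_nonneg (R : ℝ) (hR : 0 < R) (P : Polynomial ℝ) (hP : ∀ m : ℕ, 0 ≤ P.eval (m : ℝ)) :
    ∀ n : ℕ, 0 ≤ Real.exp (-R) * P.eval (n : ℝ) * R ^ n / (Nat.factorial n : ℝ) := by
  intro n
  have := hP n
  positivity

lemma exists_pos_eval (P : Polynomial ℝ) (hP0 : P ≠ 0) (hP : ∀ m : ℕ, 0 ≤ P.eval (m : ℝ)) :
    ∃ n : ℕ, 0 < P.eval (n : ℝ) := by
  by_contra h
  push_neg at h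
  have hz : ∀ n : ℕ, P.eval (n : ℝ) = 0 := fun n => le_antisymm (h n) (hP n)
  apply hP0
  apply P.eq_zero_of_infinite_isRoot
  apply Set.infinite_of_injective_forall_mem (f := fun n : ℕ => (n : ℝ))
    Nat.cast_injective
  intro n; exact hz n

lemma pc_pos (R : ℝ) (hR : 0 < R) (P : Polynomial ℝ) (hP0 : P ≠ 0)
    (hP : ∀ m : ℕ, 0 ≤ P.eval (m : ℝ)) : 0 < pcInt R P := by
  obtain ⟨n, hn⟩ := exists_pos_eval P hP0 hP
  exact Summable.tsum_pos (pc_summable R hR P) (pc_nonneg R hR P hP) n (by positivity)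

/-- finite weighted Chebyshev sum inequality -/
lemma cheby_fin (a w : ℕ → ℝ) (ha : ∀ n, 0 ≤ a n) (hw : Monotone w) (N : ℕ) :
    (∑ n ∈ Finset.range N, a n * n) * (∑ n ∈ Finset.range N, a n * w n) ≤
      (∑ n ∈ Finset.range N, a n) * (∑ n ∈ Finset.range N, a n * n * w n) := by
  set s := Finset.range N
  have h0 : 0 ≤ ∑ n ∈ s, ∑ m ∈ s, a n * a m * (((n:ℝ) - m) * (w n - w m)) := by
    refine Finset.sum_nonneg fun n _ => Finset.sum_nonneg fun m _ => ?_
    refine mul_nonneg (mul_nonneg (ha n) (ha m)) ?_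
    rcases le_total n m with h | h
    · have h1 : (n:ℝ) - m ≤ 0 := by
        have : (n:ℝ) ≤ m := by exact_mod_cast h
        linarith
      have h2 : w n - w m ≤ 0 := sub_nonpos.mpr (hw h)
      nlinarith [h1, h2]
    · have h1 : (0:ℝ) ≤ (n:ℝ) - m := by
        have : (m:ℝ) ≤ n := by exact_mod_cast h
        linarith
      have h2 : 0 ≤ w n - w m := sub_nonneg.mpr (hw h)
      exact mul_nonneg h1 h2
  have hexp : ∑ n ∈ s, ∑ m ∈ s, a n * a m * (((n:ℝ) - m) * (w n - w m))
      = (∑ n ∈ s, a n) * (∑ n ∈ s, a n * n * w n) * 2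
        - (∑ n ∈ s, a n * n) * (∑ n ∈ s, a n * w n) * 2 := by
    have step : ∀ n m : ℕ, a n * a m * (((n:ℝ) - m) * (w n - w m))
        = a n * (a m * m * w m) + (a n * n * w n) * a m
          - (a n * n) * (a m * w m) - (a n * w n) * (a m * m) := fun n m => by ring
    simp only [step]
    simp only [Finset.sum_sub_distrib, Finset.sum_add_distrib, ← Finset.mul_sum,
      ← Finset.sum_mul]
    ring
  nlinarith [h0, hexp]

lemma cheby_tsum (a w : ℕ → ℝ) (ha : ∀ n, 0 ≤ a n) (hw : Monotone w)
    (h1 : Summable a) (h2 : Summable (fun n => a n * n))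
    (h3 : Summable (fun n => a n * w n)) (h4 : Summable (fun n => a n * n * w n)) :
    (∑' n, a n * n) * (∑' n, a n * w n) ≤ (∑' n, a n) * (∑' n, a n * n * w n) := by
  have t1 := h1.hasSum.tendsto_sum_nat
  have t2 := h2.hasSum.tendsto_sum_nat
  have t3 := h3.hasSum.tendsto_sum_nat
  have t4 := h4.hasSum.tendsto_sum_nat
  exact le_of_tendsto_of_tendsto' (t2.mul t3) (t1.mul t4) (cheby_fin a w ha hw)

theorem statement16 (R : ℝ) (hR : 0 < R) (P : Polynomial ℝ) (hP : Admissible P) (j : ℕ) :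
    0 < pcInt R P ∧
    0 < pcInt R (P.comp (Polynomial.X + Polynomial.C (j : ℝ))) ∧
    pcInt R (Polynomial.X * P) / pcInt R P ≤
      pcInt R (Polynomial.X * P.comp (Polynomial.X + Polynomial.C (j : ℝ))) /
        pcInt R (P.comp (Polynomial.X + Polynomial.C (j : ℝ))) + (j : ℝ) := by
  obtain ⟨hP0, hPnn⟩ := hP
  set Q : Polynomial ℝ := P.comp (Polynomial.X + Polynomial.C (j : ℝ)) with hQdef
  have hQeval : ∀ x : ℝ, Q.eval x = P.eval (x + j) := by
    intro x; simp [hQdef, Polynomial.eval_comp]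
  have hPnn' : ∀ m : ℕ, 0 ≤ P.eval (m : ℝ) := by
    intro m
    have := hPnn m
    simpa using this
  have hQnn' : ∀ m : ℕ, 0 ≤ Q.eval (m : ℝ) := by
    intro m
    rw [hQeval]
    have := hPnn (m + j)
    push_cast at this ⊢
    convert this using 2
  have hQ0 : Q ≠ 0 := by
    intro h
    apply hP0
    apply P.eq_zero_of_infinite_isRoot
    apply Set.infinite_of_injective_forall_mem (f := fun n : ℕ => ((n : ℝ) + j))
    · intro n m hnm
      simp only [add_left_inj] at hnm
      exact_mod_cast hnm
    · intro n
      have h2 := hQeval n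
      rw [h] at h2
      simpa [Polynomial.IsRoot] using h2.symm
  -- shorthand
  have hIP : 0 < pcInt R P := pc_pos R hR P hP0 hPnn'
  have hIQ : 0 < pcInt R Q := pc_pos R hR Q hQ0 hQnn'
  refine ⟨hIP, hIQ, ?_⟩
  -- define a and w
  set a : ℕ → ℝ := fun n => Real.exp (-R) * P.eval (n : ℝ) * R ^ n / (Nat.factorial n : ℝ) with hadef
  set w : ℕ → ℝ := fun n => (Nat.descFactorial n j : ℝ) / R ^ j with hwdef
  have hanonneg : ∀ n, 0 ≤ a n := pc_nonneg R hR P hPnn'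
  have hwmono : Monotone w := by
    intro n m hnm
    have : Nat.descFactorial n j ≤ Nat.descFactorial m j := Nat.descFactorial_le j hnm
    have hcast : (Nat.descFactorial n j : ℝ) ≤ (Nat.descFactorial m j : ℝ) := by exact_mod_cast this
    exact div_le_div_of_nonneg_right hcast (by positivity) |>.trans_eq rfl
  have hfact : ∀ n : ℕ, ((n + j).factorial : ℝ)
      = (n.factorial : ℝ) * ((n + j).descFactorial j : ℝ) := by
    intro n
    have h := Nat.factorial_mul_descFactorial (Nat.le_add_left j n)
    rw [Nat.add_sub_cancel] at h
    exact_mod_cast h.symm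
  have hkey : ∀ n : ℕ, a (n + j) * w (n + j)
      = Real.exp (-R) * Q.eval (n : ℝ) * R ^ n / (Nat.factorial n : ℝ) := by
    intro n
    have hQn : Q.eval (n : ℝ) = P.eval (((n + j : ℕ)) : ℝ) := by
      rw [hQeval]; push_cast; ring_nf
    rw [hQn, hadef, hwdef]
    have hfn : ((n.factorial : ℝ)) ≠ 0 := by positivity
    have hR0 : R ≠ 0 := hR.ne'
    have hdesc : (((n + j).descFactorial j : ℝ)) ≠ 0 := by
      refine Nat.cast_ne_zero.mpr fun h => ?_
      have := Nat.descFactorial_eq_zero_iff_lt.mp h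
      omega
    simp only
    rw [hfact n, pow_add]
    field_simp
  have hzero : ∀ i : ℕ, i < j → a i * w i = 0 := by
    intro i hi
    have : Nat.descFactorial i j = 0 := Nat.descFactorial_eq_zero_iff_lt.mpr hi
    simp [hwdef, this]
  have hsumQ : Summable (fun n : ℕ => a (n + j) * w (n + j)) :=
    (pc_summable R hR Q).congr fun n => (hkey n).symm
  have hsumaw : Summable (fun n : ℕ => a n * w n) := (summable_nat_add_iff j).mp hsumQ
  have htsumQ : ∑' n : ℕ, a n * w n = pcInt R Q := by
    rw [← Summable.sum_add_tsum_nat_add j hsumaw,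
      Finset.sum_eq_zero (fun i hi => hzero i (Finset.mem_range.mp hi)), zero_add]
    exact tsum_congr hkey
  have hXQeval : ∀ n : ℕ, (Polynomial.X * Q).eval (n : ℝ) = (n : ℝ) * Q.eval (n : ℝ) := by
    intro n; simp [Polynomial.eval_mul]
  have hkey2 : ∀ n : ℕ, a (n + j) * ((n + j : ℕ) : ℝ) * w (n + j)
      = Real.exp (-R) * ((Polynomial.X * Q).eval (n : ℝ)) * R ^ n / (Nat.factorial n : ℝ)
        + (j : ℝ) * (Real.exp (-R) * Q.eval (n : ℝ) * R ^ n / (Nat.factorial n : ℝ)) := by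
    intro n
    have h1 : a (n + j) * ((n + j : ℕ) : ℝ) * w (n + j)
        = ((n : ℝ) + j) * (a (n + j) * w (n + j)) := by push_cast; ring
    rw [h1, hkey n, hXQeval n]
    ring
  have hsumXQ : Summable (fun n : ℕ => a (n + j) * ((n + j : ℕ) : ℝ) * w (n + j)) := by
    refine (((pc_summable R hR (Polynomial.X * Q)).add
      (((pc_summable R hR Q).mul_left (j : ℝ)))).congr fun n => (hkey2 n).symm)
  have hsumanw : Summable (fun n : ℕ => a n * (n : ℝ) * w n) := by
    apply (summable_nat_add_iff j).mp
    exact hsumXQ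
  have htsumXQ : ∑' n : ℕ, a n * (n : ℝ) * w n
      = pcInt R (Polynomial.X * Q) + (j : ℝ) * pcInt R Q := by
    rw [← Summable.sum_add_tsum_nat_add j hsumanw,
      Finset.sum_eq_zero (fun i hi => by
        have := hzero i (Finset.mem_range.mp hi)
        have hw0 : w i = 0 := by
          have : Nat.descFactorial i j = 0 :=
            Nat.descFactorial_eq_zero_iff_lt.mpr (Finset.mem_range.mp hi)
          simp [hwdef, this]
        simp [hw0]), zero_add]
    rw [tsum_congr hkey2]
    rw [Summable.tsum_add (pc_summable R hR (Polynomial.X * Q)) ((pc_summable R hR Q).mul_left (j : ℝ))]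
    rw [tsum_mul_left]
    rfl
  have hsuma : Summable a := pc_summable R hR P
  have hsuman : Summable (fun n : ℕ => a n * (n : ℝ)) := by
    refine (pc_summable R hR (Polynomial.X * P)).congr fun n => ?_
    simp [hadef, Polynomial.eval_mul]
    ring
  have htsuma : ∑' n : ℕ, a n = pcInt R P := rfl
  have htsuman : ∑' n : ℕ, a n * (n : ℝ) = pcInt R (Polynomial.X * P) := by
    refine tsum_congr fun n => ?_
    simp [hadef, Polynomial.eval_mul]
    ring
  have hmain := cheby_tsum a w hanonneg hwmono hsuma hsuman hsumaw hsumanw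
  rw [htsuma, htsuman, htsumQ, htsumXQ] at hmain
  rw [div_add' _ _ _ hIQ.ne', div_le_div_iff₀ hIP hIQ]
  nlinarith [hmain]
end
end

section
/- Let Ω be an admissible polynomial, let n ≥ 1 be an integer, and let 0 < R₁ < R₂ be real numbers. For i = 1, 2, let Π_i be a monic real polynomial of degree n such that ∫ Π_i·q dμ_{R_i}^Ω = 0 for every real polynomial q of degree less than n, and suppose Π_i has n real zeros λ_{1}(R_i) < λ_{2}(R_i) < … < λ_{n}(R_i) (so Π_i(x) = ∏_{k=1}^{n} (x − λ_k(R_i))). Then λ_k(R₁) < λ_k(R₂) for every k = 1, …, n; that is, each zero of the degree-n orthogonal polynomial with respect to the Christoffel transform measure μ_R^Ω is a strictly increasing function of the parameter R. -/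
open Polynomial

noncomputable section

/-- Integral of a polynomial against the Christoffel transform measure `μ_R^Ω`. -/
def chInt (Ω : Polynomial ℝ) (R : ℝ) (f : Polynomial ℝ) : ℝ :=
  ∑' j : ℕ, Real.exp (-R) * f.eval (j : ℝ) * Ω.eval (j : ℝ) * R ^ j / (Nat.factorial j : ℝ)

/-!
Fix `k` and test both measures against `p = ∏_{l<k} (x - λ_l(R₁)) · ∏_{l>k} (x - λ_l(R₂))`,
of degree `n - 1`. Orthogonality makes the zeros of `Π` behave like eigenvalues: the polynomials
`e_j = Π / (x - λ_j)` satisfy `∫ x e_i e_j = λ_i ∫ e_i e_j`, so they are mutually orthogonal.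
Lagrange interpolation writes `p` as a combination of the `e_j(R₂)` with `j ≤ k`, and also of the
`e_j(R₁)` with `j ≥ k`; hence the Rayleigh quotient `ρ_R(p) = ∫ x p² dμ_R / ∫ p² dμ_R` satisfies
`λ_k(R₁) ≤ ρ_{R₁}(p)` and `ρ_{R₂}(p) ≤ λ_k(R₂)`. Finally `dμ_{R₂} / dμ_{R₁}` is proportional to
`(R₂/R₁)^x`, which is strictly increasing, so passing from `μ_{R₁}` to `μ_{R₂}` strictly increases
the mean of `x` under `p² dμ`: `ρ_{R₁}(p) < ρ_{R₂}(p)`.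
-/

open Filter Asymptotics Finset
open scoped Nat

theorem Polynomial.summable_eval_mul_pow_div_factorial (p : ℝ[X]) (R : ℝ) :
    Summable fun j : ℕ => p.eval (j : ℝ) * R ^ j / j ! := by
  have hp : (fun j : ℕ => p.eval (j : ℝ)) =O[atTop] fun j => (j : ℝ) ^ p.natDegree := by
    have := (isBigO_atTop_of_degree_le p (X ^ p.natDegree) (by
      simp [degree_le_natDegree])).comp_tendsto tendsto_natCast_atTop_atTop
    simpa [Function.comp_def] using this
  refine summable_of_isBigO_nat (Real.summable_pow_div_factorial (2 * R)) ?_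
  simp_rw [mul_div_assoc, mul_pow, mul_div_assoc]
  exact (hp.trans (isLittleO_pow_const_const_pow_of_one_lt _ one_lt_two).isBigO).mul
    (isBigO_refl _ _)

theorem Polynomial.exists_nat_eval_ne_zero {K : Type*} [CommRing K] [IsDomain K] [CharZero K]
    {p : K[X]} (hp : p ≠ 0) : ∃ j : ℕ, p.eval (j : K) ≠ 0 := by
  by_contra! h
  exact hp (eq_zero_of_infinite_isRoot p
    (Set.infinite_of_injective_forall_mem Nat.cast_injective h))

theorem Polynomial.degree_prod_X_sub_C {K ι : Type*} [CommRing K] [Nontrivial K] (s : Finset ι)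
    (f : ι → K) :
    (∏ a ∈ s, (X - C (f a))).degree = ((#s : ℕ) : WithBot ℕ) := by
  rw [degree_eq_natDegree (monic_prod_X_sub_C f s).ne_zero, natDegree_finsetProd_X_sub_C_eq_card]

theorem Polynomial.exists_mul_prod_sdiff_eq_sum_smul_prod_erase {F ι : Type*} [Field F]
    [DecidableEq ι] {T s : Finset ι} (hs : s ⊆ T) {v : ι → F} (hv : Set.InjOn v s) {q : F[X]}
    (hq : q.degree < #s) :
    ∃ c : ι → F, q * ∏ l ∈ T \ s, (X - C (v l)) = ∑ j ∈ s, c j • ∏ l ∈ T.erase j, (X - C (v l)) := by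
  refine ⟨fun j => q.eval (v j) * ∏ l ∈ s.erase j, (v j - v l)⁻¹, ?_⟩
  conv_lhs => rw [Lagrange.eq_interpolate hv hq, Lagrange.interpolate_apply, sum_mul]
  refine sum_congr rfl fun j hj => ?_
  have hT : T.erase j \ s.erase j = T \ s := by
    ext l
    simp only [Finset.mem_sdiff, Finset.mem_erase]
    grind
  rw [← prod_sdiff (erase_subset_erase j hs), hT, Lagrange.basis]
  simp only [Lagrange.basisDivisor, prod_mul_distrib, ← map_prod, smul_eq_C_mul, C_mul]
  ring

section LinearFunctional

variable {K ι : Type*} [Field K] (L : K[X] →ₗ[K] K) {s : Finset ι} {e : ι → K[X]}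

theorem LinearMap.apply_mul_eq_zero_of_apply_X_mul {t : ι → K}
    (hX : ∀ i ∈ s, ∀ j ∈ s, L (X * (e i * e j)) = t i * L (e i * e j)) (ht : Set.InjOn t s)
    {i j : ι} (hi : i ∈ s) (hj : j ∈ s) (hij : i ≠ j) : L (e i * e j) = 0 := by
  have hji := hX j hj i hi
  rw [mul_comm (e j)] at hji
  have : (t i - t j) * L (e i * e j) = 0 := by rw [sub_mul, ← hX i hi j hj, ← hji, sub_self]
  exact (mul_eq_zero.mp this).resolve_left (sub_ne_zero.mpr (ht.ne hi hj hij))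

theorem LinearMap.apply_mul_sum_smul_mul_self {F : K[X]} {τ : ι → K}
    (hF : ∀ i ∈ s, ∀ j ∈ s, L (F * (e i * e j)) = τ i * L (e i * e j))
    (horth : ∀ i ∈ s, ∀ j ∈ s, i ≠ j → L (e i * e j) = 0) (c : ι → K) :
    L (F * ((∑ j ∈ s, c j • e j) * ∑ j ∈ s, c j • e j)) =
      ∑ j ∈ s, c j ^ 2 * τ j * L (e j * e j) := by
  simp_rw [sum_mul_sum, mul_sum, smul_mul_smul_comm, mul_smul_comm, map_sum, map_smul]
  refine sum_congr rfl fun i hi => ?_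
  rw [sum_eq_single_of_mem i hi fun j hj hji => by rw [hF i hi j hj, horth i hi j hj hji.symm,
    mul_zero, smul_zero], hF i hi i hi, smul_eq_mul]
  ring

theorem LinearMap.apply_X_sub_C_mul_sum_smul_mul_self {t : ι → K}
    (hX : ∀ i ∈ s, ∀ j ∈ s, L (X * (e i * e j)) = t i * L (e i * e j)) (ht : Set.InjOn t s)
    (c : ι → K) (M : K) :
    L ((X - C M) * ((∑ j ∈ s, c j • e j) * ∑ j ∈ s, c j • e j)) =
      ∑ j ∈ s, c j ^ 2 * (t j - M) * L (e j * e j) := by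
  refine L.apply_mul_sum_smul_mul_self (fun i hi j hj => ?_)
    (fun i hi j hj => L.apply_mul_eq_zero_of_apply_X_mul hX ht hi hj) c
  rw [sub_mul, map_sub, ← smul_eq_C_mul, map_smul, hX i hi j hj, smul_eq_mul,
    sub_mul]

end LinearFunctional

theorem tsum_mul_sub_mul_pos_of_strictMono {w : ℕ → ℝ} {c : ℝ} {G : ℝ → ℝ} (hG : StrictMono G)
    (hw : ∀ j, 0 ≤ w j) {j₀ : ℕ} (hj₀ : (j₀ : ℝ) ≠ c) (hwj₀ : 0 < w j₀)
    (hs : Summable fun j : ℕ => (j - c) * w j)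
    (hsG : Summable fun j : ℕ => G j * ((j - c) * w j))
    (h0 : ∑' j : ℕ, (j - c) * w j = 0) :
    0 < ∑' j : ℕ, G j * ((j - c) * w j) := by
  have hpos : ∀ x : ℝ, x ≠ c → 0 < (G x - G c) * (x - c) := fun x hx => by
    rcases hx.lt_or_gt with h | h
    · exact mul_pos_of_neg_of_neg (sub_neg.mpr (hG h)) (sub_neg.mpr h)
    · exact mul_pos (sub_pos.mpr (hG h)) (sub_pos.mpr h)
  have hnonneg : ∀ x : ℝ, 0 ≤ (G x - G c) * (x - c) := fun x => by
    rcases eq_or_ne x c with rfl | hx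
    · simp
    · exact (hpos x hx).le
  calc 0 < ∑' j : ℕ, (G j - G c) * (j - c) * w j :=
        (hsG.sub (hs.mul_left (G c))).congr (fun j => by ring) |>.tsum_pos
          (fun j => mul_nonneg (hnonneg j) (hw j)) j₀ (mul_pos (hpos j₀ hj₀) hwj₀)
    _ = ∑' j : ℕ, G j * ((j - c) * w j) - G c * ∑' j : ℕ, (j - c) * w j := by
        rw [← tsum_mul_left, ← hsG.tsum_sub (hs.mul_left (G c))]
        exact tsum_congr fun j => by ring
    _ = ∑' j : ℕ, G j * ((j - c) * w j) := by rw [h0, mul_zero, sub_zero]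

def chTerm (Ω : ℝ[X]) (R : ℝ) (f : ℝ[X]) (j : ℕ) : ℝ :=
  Real.exp (-R) * f.eval (j : ℝ) * Ω.eval (j : ℝ) * R ^ j / j !

theorem chInt_eq_tsum_chTerm (Ω : ℝ[X]) (R : ℝ) (f : ℝ[X]) :
    chInt Ω R f = ∑' j, chTerm Ω R f j := rfl

theorem summable_chTerm (Ω : ℝ[X]) (R : ℝ) (f : ℝ[X]) : Summable (chTerm Ω R f) :=
  ((f * Ω).summable_eval_mul_pow_div_factorial R).mul_left (Real.exp (-R)) |>.congr fun j => by
    simp only [chTerm, eval_mul]; ring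

def chIntLinear (Ω : ℝ[X]) (R : ℝ) : ℝ[X] →ₗ[ℝ] ℝ where
  toFun := chInt Ω R
  map_add' f g := by
    simp only [chInt_eq_tsum_chTerm, ← (summable_chTerm Ω R f).tsum_add (summable_chTerm Ω R g)]
    exact tsum_congr fun j => by simp only [chTerm, eval_add]; ring
  map_smul' a f := by
    simp only [chInt_eq_tsum_chTerm, RingHom.id_apply, smul_eq_mul, ← tsum_mul_left]
    exact tsum_congr fun j => by simp only [chTerm, eval_smul, smul_eq_mul]; ring

theorem chIntLinear_apply (Ω : ℝ[X]) (R : ℝ) (f : ℝ[X]) : chIntLinear Ω R f = chInt Ω R f := rfl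

theorem chInt_X_sub_C_mul (Ω : ℝ[X]) (R M : ℝ) (f : ℝ[X]) :
    chInt Ω R ((X - C M) * f) = chInt Ω R (X * f) - M * chInt Ω R f := by
  simp only [← chIntLinear_apply, sub_mul, ← smul_eq_C_mul, map_sub, map_smul,
    smul_eq_mul]

theorem chTerm_mul_self_nonneg {Ω : ℝ[X]} (hΩ : Admissible Ω) {R : ℝ} (hR : 0 ≤ R) (p : ℝ[X])
    (j : ℕ) : 0 ≤ chTerm Ω R (p * p) j := by
  have hΩj : 0 ≤ Ω.eval (j : ℝ) := by exact_mod_cast hΩ.2 j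
  rw [chTerm, eval_mul, ← sq]
  positivity

theorem chTerm_mul_self_pos {Ω : ℝ[X]} (hΩ : Admissible Ω) {R : ℝ} (hR : 0 < R) {p : ℝ[X]}
    {j : ℕ} (hj : (p * Ω).eval (j : ℝ) ≠ 0) : 0 < chTerm Ω R (p * p) j := by
  rw [eval_mul, mul_ne_zero_iff] at hj
  obtain ⟨hpj, hΩj⟩ := hj
  have hΩpos : 0 < Ω.eval (j : ℝ) := (show (0 : ℝ) ≤ _ by exact_mod_cast hΩ.2 j).lt_of_ne' hΩj
  rw [chTerm, eval_mul, ← sq]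
  positivity

theorem chInt_mul_self_nonneg {Ω : ℝ[X]} (hΩ : Admissible Ω) {R : ℝ} (hR : 0 ≤ R) (p : ℝ[X]) :
    0 ≤ chInt Ω R (p * p) :=
  tsum_nonneg (chTerm_mul_self_nonneg hΩ hR p)

theorem chInt_mul_self_pos {Ω : ℝ[X]} (hΩ : Admissible Ω) {R : ℝ} (hR : 0 < R) {p : ℝ[X]}
    (hp : p ≠ 0) : 0 < chInt Ω R (p * p) := by
  obtain ⟨j, hj⟩ := exists_nat_eval_ne_zero (mul_ne_zero hp hΩ.1)
  exact (summable_chTerm Ω R _).tsum_pos (chTerm_mul_self_nonneg hΩ hR.le p) j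
    (chTerm_mul_self_pos hΩ hR hj)

def chRayleigh (Ω : ℝ[X]) (R : ℝ) (p : ℝ[X]) : ℝ :=
  chInt Ω R (X * (p * p)) / chInt Ω R (p * p)

theorem chTerm_eq_exp_mul_rpow_mul (Ω : ℝ[X]) {R₁ : ℝ} (hR₁ : 0 < R₁) (R₂ : ℝ) (f : ℝ[X])
    (j : ℕ) : chTerm Ω R₂ f j = Real.exp (R₁ - R₂) * ((R₂ / R₁) ^ (j : ℝ) * chTerm Ω R₁ f j) := by
  have hexp : Real.exp (-R₂) = Real.exp (R₁ - R₂) * Real.exp (-R₁) := by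
    rw [← Real.exp_add]; ring_nf
  rw [Real.rpow_natCast, div_pow, chTerm, chTerm, hexp]
  field_simp

theorem chRayleigh_lt_chRayleigh {Ω : ℝ[X]} (hΩ : Admissible Ω) {R₁ R₂ : ℝ} (hR₁ : 0 < R₁)
    (hR₁₂ : R₁ < R₂) {p : ℝ[X]} (hp : p ≠ 0) : chRayleigh Ω R₁ p < chRayleigh Ω R₂ p := by
  set c := chRayleigh Ω R₁ p with hc
  set q := (X - C c) * (p * p)
  have hq : ∀ j : ℕ, chTerm Ω R₁ q j = (j - c) * chTerm Ω R₁ (p * p) j := fun j => by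
    simp only [q, chTerm, eval_mul, eval_sub, eval_X, eval_C]; ring
  have hq₁ : chInt Ω R₁ q = 0 := by
    rw [chInt_X_sub_C_mul, hc, chRayleigh, div_mul_cancel₀ _ (chInt_mul_self_pos hΩ hR₁ hp).ne',
      sub_self]
  obtain ⟨j₀, hj₀⟩ :=
    exists_nat_eval_ne_zero (mul_ne_zero (X_sub_C_ne_zero c) (mul_ne_zero hp hΩ.1))
  rw [eval_mul, mul_ne_zero_iff, eval_sub, eval_X, eval_C, sub_ne_zero] at hj₀
  -- `dμ_{R₂}/dμ_{R₁}` is proportional to the increasing function `(R₂/R₁)^x`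
  have hq₂ : 0 < chInt Ω R₂ q := by
    have hscale := chTerm_eq_exp_mul_rpow_mul Ω hR₁ R₂ q
    rw [chInt_eq_tsum_chTerm, tsum_congr hscale, tsum_mul_left]
    simp only [hq] at hscale ⊢
    refine mul_pos (Real.exp_pos _) (tsum_mul_sub_mul_pos_of_strictMono
      (Real.strictMono_rpow_of_base_gt_one ((one_lt_div hR₁).mpr hR₁₂))
      (chTerm_mul_self_nonneg hΩ hR₁.le p) hj₀.1 (chTerm_mul_self_pos hΩ hR₁ hj₀.2)
      ((summable_chTerm Ω R₁ q).congr hq) ?_ ?_)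
    · exact (summable_mul_left_iff (Real.exp_pos _).ne').mp
        ((summable_chTerm Ω R₂ q).congr hscale)
    · rwa [chInt_eq_tsum_chTerm, tsum_congr hq] at hq₁
  rw [chInt_X_sub_C_mul, sub_pos] at hq₂
  exact (lt_div_iff₀ (chInt_mul_self_pos hΩ (hR₁.trans hR₁₂) hp)).mpr hq₂

section OrthogonalPolynomial

variable {Ω : ℝ[X]} {R : ℝ} {n : ℕ} {lam : ℕ → ℝ}
  (horth : ∀ q : ℝ[X], q.natDegree < n → chInt Ω R ((∏ k ∈ range n, (X - C (lam k))) * q) = 0)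
include horth

theorem chInt_X_mul_prod_erase_mul_prod_erase {i j : ℕ} (hi : i ∈ range n) (hj : j ∈ range n) :
    chInt Ω R (X * ((∏ l ∈ (range n).erase i, (X - C (lam l))) *
      ∏ l ∈ (range n).erase j, (X - C (lam l)))) =
    lam i * chInt Ω R ((∏ l ∈ (range n).erase i, (X - C (lam l))) *
      ∏ l ∈ (range n).erase j, (X - C (lam l))) := by
  have hX : X * ∏ l ∈ (range n).erase i, (X - C (lam l)) =
      ∏ l ∈ range n, (X - C (lam l)) + lam i • ∏ l ∈ (range n).erase i, (X - C (lam l)) := by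
    rw [← mul_prod_erase _ _ hi, smul_eq_C_mul]; ring
  have hdeg : (∏ l ∈ (range n).erase j, (X - C (lam l))).natDegree < n := by
    rw [natDegree_finsetProd_X_sub_C_eq_card, card_erase_of_mem hj, card_range]
    have := mem_range.mp hj
    omega
  rw [← mul_assoc, hX, add_mul, smul_mul_assoc, ← chIntLinear_apply, map_add, map_smul,
    chIntLinear_apply, horth _ hdeg, zero_add, chIntLinear_apply, smul_eq_mul]

variable (hlam : Set.InjOn lam (range n)) {s : Finset ℕ} (hs : s ⊆ range n) {q : ℝ[X]}
  (hq : q.degree < #s)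
include hlam hs hq

theorem exists_chInt_X_sub_C_mul_self_eq_sum (M : ℝ) :
    ∃ c : ℕ → ℝ, chInt Ω R ((X - C M) * ((q * ∏ l ∈ range n \ s, (X - C (lam l))) *
      (q * ∏ l ∈ range n \ s, (X - C (lam l))))) =
    ∑ j ∈ s, c j ^ 2 * (lam j - M) * chInt Ω R ((∏ l ∈ (range n).erase j, (X - C (lam l))) *
      ∏ l ∈ (range n).erase j, (X - C (lam l))) := by
  obtain ⟨c, hc⟩ := exists_mul_prod_sdiff_eq_sum_smul_prod_erase hs (hlam.mono hs) hq
  refine ⟨c, ?_⟩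
  rw [hc]
  exact (chIntLinear Ω R).apply_X_sub_C_mul_sum_smul_mul_self
    (fun i hi j hj => chInt_X_mul_prod_erase_mul_prod_erase horth (hs hi) (hs hj))
    (hlam.mono hs) c M

variable (hΩ : Admissible Ω) (hR : 0 < R) (hq₀ : q ≠ 0)
include hΩ hR hq₀

theorem chRayleigh_le_of_forall_le {M : ℝ} (hM : ∀ j ∈ s, lam j ≤ M) :
    chRayleigh Ω R (q * ∏ l ∈ range n \ s, (X - C (lam l))) ≤ M := by
  obtain ⟨c, hc⟩ := exists_chInt_X_sub_C_mul_self_eq_sum horth hlam hs hq M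
  rw [chRayleigh, div_le_iff₀ (chInt_mul_self_pos hΩ hR
    (mul_ne_zero hq₀ (monic_prod_X_sub_C _ _).ne_zero)), ← sub_nonpos, ← chInt_X_sub_C_mul, hc]
  exact sum_nonpos fun j hj => mul_nonpos_of_nonpos_of_nonneg
    (mul_nonpos_of_nonneg_of_nonpos (sq_nonneg _) (sub_nonpos.mpr (hM j hj)))
    (chInt_mul_self_nonneg hΩ hR.le _)

theorem le_chRayleigh_of_forall_le {M : ℝ} (hM : ∀ j ∈ s, M ≤ lam j) :
    M ≤ chRayleigh Ω R (q * ∏ l ∈ range n \ s, (X - C (lam l))) := by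
  obtain ⟨c, hc⟩ := exists_chInt_X_sub_C_mul_self_eq_sum horth hlam hs hq M
  rw [chRayleigh, le_div_iff₀ (chInt_mul_self_pos hΩ hR
    (mul_ne_zero hq₀ (monic_prod_X_sub_C _ _).ne_zero)), ← sub_nonneg, ← chInt_X_sub_C_mul, hc]
  exact sum_nonneg fun j hj => mul_nonneg
    (mul_nonneg (sq_nonneg _) (sub_nonneg.mpr (hM j hj))) (chInt_mul_self_nonneg hΩ hR.le _)

end OrthogonalPolynomial

theorem statement19_general (Ω : Polynomial ℝ) (hΩ : Admissible Ω) (n : ℕ)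
    (R₁ R₂ : ℝ) (hR₁ : 0 < R₁) (hR₁₂ : R₁ < R₂)
    (Pi₁ Pi₂ : Polynomial ℝ)
    (horth₁ : ∀ q : Polynomial ℝ, q.natDegree < n → chInt Ω R₁ (Pi₁ * q) = 0)
    (horth₂ : ∀ q : Polynomial ℝ, q.natDegree < n → chInt Ω R₂ (Pi₂ * q) = 0)
    (lam₁ lam₂ : ℕ → ℝ)
    (hlam₁mono : ∀ i j, i < j → j < n → lam₁ i < lam₁ j)
    (hlam₂mono : ∀ i j, i < j → j < n → lam₂ i < lam₂ j)
    (hPi₁ : Pi₁ = ∏ k ∈ Finset.range n, (Polynomial.X - Polynomial.C (lam₁ k)))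
    (hPi₂ : Pi₂ = ∏ k ∈ Finset.range n, (Polynomial.X - Polynomial.C (lam₂ k))) :
    ∀ k < n, lam₁ k < lam₂ k := by
  subst hPi₁ hPi₂
  have hmono : ∀ lam : ℕ → ℝ, (∀ i j, i < j → j < n → lam i < lam j) →
      StrictMonoOn lam (range n) := fun lam h i _ j hj hij => h i j hij (mem_range.mp hj)
  intro k hk
  have hkn : k ∈ range n := mem_range.mpr hk
  have hs₁ : Ico k n ⊆ range n := fun j hj => mem_range.mpr (mem_Ico.mp hj).2
  have hs₂ : range (k + 1) ⊆ range n := range_subset_range.mpr hk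
  have hp₁ : range n \ Ico k n = range k := by ext; simp; omega
  have hp₂ : range n \ range (k + 1) = Ico (k + 1) n := by ext; simp; omega
  set p₁ := ∏ l ∈ range k, (X - C (lam₁ l))
  set p₂ := ∏ l ∈ Ico (k + 1) n, (X - C (lam₂ l))
  calc lam₁ k ≤ chRayleigh Ω R₁ (p₂ * p₁) := by
        simpa only [hp₁] using le_chRayleigh_of_forall_le horth₁ (hmono _ hlam₁mono).injOn hs₁
          (by simp only [degree_prod_X_sub_C, Nat.card_Ico]; exact_mod_cast (by omega)) hΩ hR₁
          (monic_prod_X_sub_C _ _).ne_zero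
          (fun j hj => ((hmono _ hlam₁mono).le_iff_le hkn (hs₁ hj)).mpr (mem_Ico.mp hj).1)
    _ = chRayleigh Ω R₁ (p₁ * p₂) := by rw [mul_comm]
    _ < chRayleigh Ω R₂ (p₁ * p₂) := chRayleigh_lt_chRayleigh hΩ hR₁ hR₁₂
          ((monic_prod_X_sub_C _ _).mul (monic_prod_X_sub_C _ _)).ne_zero
    _ ≤ lam₂ k := by
        simpa only [hp₂] using chRayleigh_le_of_forall_le horth₂ (hmono _ hlam₂mono).injOn hs₂
          (by simp only [degree_prod_X_sub_C, card_range]; exact_mod_cast k.lt_succ_self) hΩ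
          (hR₁.trans hR₁₂) (monic_prod_X_sub_C _ _).ne_zero
          (fun j hj => ((hmono _ hlam₂mono).le_iff_le (hs₂ hj) hkn).mpr (mem_range_succ_iff.mp hj))

theorem statement19 (Ω : Polynomial ℝ) (hΩ : Admissible Ω) (n : ℕ) (hn : 1 ≤ n)
    (R₁ R₂ : ℝ) (hR₁ : 0 < R₁) (hR₁₂ : R₁ < R₂)
    (Pi₁ Pi₂ : Polynomial ℝ)
    (hPi₁monic : Pi₁.Monic) (hPi₁deg : Pi₁.natDegree = n)
    (hPi₂monic : Pi₂.Monic) (hPi₂deg : Pi₂.natDegree = n)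
    (horth₁ : ∀ q : Polynomial ℝ, q.natDegree < n → chInt Ω R₁ (Pi₁ * q) = 0)
    (horth₂ : ∀ q : Polynomial ℝ, q.natDegree < n → chInt Ω R₂ (Pi₂ * q) = 0)
    (lam₁ lam₂ : ℕ → ℝ)
    (hlam₁mono : ∀ i j, i < j → j < n → lam₁ i < lam₁ j)
    (hlam₂mono : ∀ i j, i < j → j < n → lam₂ i < lam₂ j)
    (hPi₁ : Pi₁ = ∏ k ∈ Finset.range n, (Polynomial.X - Polynomial.C (lam₁ k)))
    (hPi₂ : Pi₂ = ∏ k ∈ Finset.range n, (Polynomial.X - Polynomial.C (lam₂ k))) :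
    ∀ k < n, lam₁ k < lam₂ k :=
  statement19_general Ω hΩ n R₁ R₂ hR₁ hR₁₂ Pi₁ Pi₂ horth₁ horth₂ lam₁ lam₂ hlam₁mono hlam₂mono hPi₁
    hPi₂
end
end
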